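/- arXiv:1905.04108 — 12 statements merged into one kernel-verified Lean document; each statement's English description precedes it below -/
import Mathlib

section
/- Let G be a graph on n vertices, k a positive integer, and suppose the vertex set admits a partition into independent sets V_1,...,V_ℓ such that ℓ − Σ_{i=1}^{ℓ} ((k−1)/k)^{|V_i|} < 1. Then for any strategy family with k colors there exists a coloring for which every player guesses wrong; i.e., μ(G) ≤ k−1. -/
/-!
Since `V_i` is independent, the guesses of its players depend only on the colours outside `V_i`;
fixing those, each player of `V_i` has exactly `k - 1` wrong colours to wear, so a fraction
`((k-1)/k)^{|V_i|}` of all colourings makes every player of `V_i` guess wrong. By the union bound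
the colourings in which somebody guesses right make up at most a fraction
`Σ_i (1 - ((k-1)/k)^{|V_i|}) < 1` of all colourings.
-/

open Finset

namespace SimpleGraph

variable {V α : Type*}

def IsHatStrategy (G : SimpleGraph V) (F : V → (V → α) → α) : Prop :=
  ∀ v x y, (∀ u, G.Adj v u → x u = y u) → F v x = F v y

variable [Fintype V] [DecidableEq V] [Fintype α] [DecidableEq α]

def allGuessWrong (F : V → (V → α) → α) (S : Finset V) : Finset (V → α) :=
  univ.filter fun x => ∀ v ∈ S, F v x ≠ x v

theorem card_allGuessWrong [Nonempty α] {G : SimpleGraph V} {F : V → (V → α) → α}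
    (hF : G.IsHatStrategy F) {S : Finset V} (hS : G.IsIndepSet S) :
    #(allGuessWrong F S) = (Fintype.card α - 1) ^ #S * Fintype.card α ^ (Fintype.card V - #S) := by
  let e := (Equiv.piEquivPiSubtypeProd (· ∈ S) fun _ => α).trans (Equiv.prodComm _ _)
  -- the players of `S` only see the colours outside `S`
  let guess (v : S) (y : {v // v ∉ S} → α) : α :=
    F v (e.symm (y, fun _ => Classical.arbitrary α))
  have hguess (v : S) (y z) : F v (e.symm (y, z)) = guess v y := by
    refine hF v _ _ fun u hu => ?_
    have hu' : u ∉ S := fun h => hS v.2 h (G.ne_of_adj hu) hu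
    simp [e, Equiv.piEquivPiSubtypeProd, hu']
  calc #(allGuessWrong F S)
      = Fintype.card {x : V → α // ∀ v : S, F v x ≠ x v} := by
        rw [allGuessWrong, ← Fintype.card_subtype]; simp
    _ = Fintype.card ((y : {v // v ∉ S} → α) × ((v : S) → {a // a ≠ guess v y})) := by
        refine Fintype.card_congr <| (e.subtypeEquiv fun x => ?_).trans <|
          ((Equiv.subtypeProdEquivSigmaSubtype fun y z => ∀ v : S, z v ≠ guess v y)).trans
          (Equiv.sigmaCongrRight fun y => Equiv.subtypePiEquivPi (p := fun v a => a ≠ guess v y))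
        refine forall_congr' fun v => ?_
        rw [← hguess v (e x).1 (e x).2, Prod.mk.eta, Equiv.symm_apply_apply, ne_comm]
        rfl
    _ = _ := by
        simp [Fintype.card_sigma, Fintype.card_pi, Fintype.card_subtype_compl, mul_comm]

theorem card_compl_allGuessWrong [Nonempty α] {G : SimpleGraph V} {F : V → (V → α) → α}
    (hF : G.IsHatStrategy F) {S : Finset V} (hS : G.IsIndepSet S) :
    (#(allGuessWrong F S)ᶜ : ℝ) =
      Fintype.card α ^ Fintype.card V * (1 - ((Fintype.card α - 1) / Fintype.card α) ^ #S) := by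
  have hα : (Fintype.card α : ℝ) ≠ 0 := by positivity
  rw [card_compl, Nat.cast_sub (card_le_univ _), card_allGuessWrong hF hS, Fintype.card_fun]
  push_cast [Nat.cast_pred Fintype.card_pos]
  rw [pow_sub₀ _ hα (card_le_univ S), div_pow]
  field_simp

theorem exists_forall_guess_ne_of_sum_card_lt {ι : Type*} [Fintype ι] (F : V → (V → α) → α)
    (P : ι → Finset V) (hcover : ∀ v, ∃ i, v ∈ P i)
    (h : ∑ i, #(allGuessWrong F (P i))ᶜ < Fintype.card (V → α)) :
    ∃ x : V → α, ∀ v, F v x ≠ x v := by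
  rw [← card_univ] at h
  obtain ⟨x, -, hx⟩ := exists_mem_notMem_of_card_lt_card (card_biUnion_le.trans_lt h)
  refine ⟨x, fun v => ?_⟩
  obtain ⟨i, hi⟩ := hcover v
  have hxi : x ∈ allGuessWrong F (P i) := by
    by_contra hxi
    exact hx (mem_biUnion.mpr ⟨i, mem_univ i, mem_compl.mpr hxi⟩)
  exact (mem_filter.mp hxi).2 v hi

end SimpleGraph

open SimpleGraph in
theorem hat_guessing_partition_bound_general {V : Type*} [Fintype V] [DecidableEq V]
    (G : SimpleGraph V) (k ℓ : ℕ) (hk : 0 < k)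
    (P : Fin ℓ → Finset V)
    (hcover : ∀ v : V, ∃ i : Fin ℓ, v ∈ P i)
    (hind : ∀ i : Fin ℓ, ∀ u ∈ P i, ∀ w ∈ P i, ¬ G.Adj u w)
    (hsum : (ℓ : ℝ) - ∑ i : Fin ℓ, (((k : ℝ) - 1) / k) ^ (P i).card < 1)
    (F : V → (V → Fin k) → Fin k)
    (hF : ∀ v : V, ∀ x y : V → Fin k, (∀ u : V, G.Adj v u → x u = y u) → F v x = F v y) :
    ∃ x : V → Fin k, ∀ v : V, F v x ≠ x v := by
  have : Nonempty (Fin k) := Fin.pos_iff_nonempty.mp hk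
  refine exists_forall_guess_ne_of_sum_card_lt F P hcover ?_
  have hP (i : Fin ℓ) : G.IsIndepSet (P i : Set V) := fun u hu w hw _ => hind i u hu w hw
  have hsum_lt : (∑ i, #(allGuessWrong F (P i))ᶜ : ℝ) < k ^ Fintype.card V := by
    simp only [card_compl_allGuessWrong hF (hP _), Fintype.card_fin, ← mul_sum, sum_sub_distrib,
      sum_const, card_univ, nsmul_eq_mul, mul_one]
    exact mul_lt_of_lt_one_right (by positivity) hsum
  rw [Fintype.card_fun, Fintype.card_fin]
  exact_mod_cast hsum_lt

/-- If the vertex set of `G` admits a partition into independent sets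
`V_1, …, V_ℓ` with `ℓ − Σ_i ((k−1)/k)^{|V_i|} < 1`, then for any strategy family with
`k` colors there is a coloring for which every player guesses wrong (so `μ(G) ≤ k−1`). -/
theorem hat_guessing_partition_bound {V : Type*} [Fintype V] [DecidableEq V]
    (G : SimpleGraph V) (k ℓ : ℕ) (hk : 0 < k)
    (P : Fin ℓ → Finset V)
    (hdisj : ∀ i j : Fin ℓ, i ≠ j → Disjoint (P i) (P j))
    (hcover : ∀ v : V, ∃ i : Fin ℓ, v ∈ P i)
    (hind : ∀ i : Fin ℓ, ∀ u ∈ P i, ∀ w ∈ P i, ¬ G.Adj u w)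
    (hsum : (ℓ : ℝ) - ∑ i : Fin ℓ, (((k : ℝ) - 1) / k) ^ (P i).card < 1)
    (F : V → (V → Fin k) → Fin k)
    (hF : ∀ v : V, ∀ x y : V → Fin k, (∀ u : V, G.Adj v u → x u = y u) → F v x = F v y) :
    ∃ x : V → Fin k, ∀ v : V, F v x ≠ x v :=
  hat_guessing_partition_bound_general G k ℓ hk P hcover hind hsum F hF
end

section
/- Let G be a graph of order n with chromatic number h, and let k be a positive integer. If k > 1 / (1 − (1 − 1/h)^{h/n}), then μ(G) ≤ k − 1. -/
/-!
Fix a proper colouring of `G` with `h` colours and a winning strategy with `q` hat colours.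
A colour class `I` is independent, so its players see only hats outside `I`; hence exactly a
fraction `(1 - 1/q) ^ |I|` of all hat assignments make every player of `I` guess wrong. Every
assignment has a correct guess in some class, so these fractions sum to at most `h - 1`, while by
Jensen's inequality for `t ↦ (1 - 1/q) ^ t` their sum is at least `h (1 - 1/q) ^ (n/h)`. Thus
`1 - 1/q ≤ (1 - 1/h) ^ (h/n)`, which fails as soon as `q ≥ k`.
-/

/-- The hat guessing number of a graph: the largest number of colors `k` for which the
players (one per vertex, each seeing only the colors at adjacent vertices) have a
strategy guaranteeing at least one correct guess on every coloring. -/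
noncomputable def hatGuessingNumber {V : Type*} [Fintype V] (G : SimpleGraph V) : ℕ :=
  sSup {k : ℕ | ∃ F : V → (V → Fin k) → Fin k,
    (∀ v : V, ∀ x y : V → Fin k, (∀ u : V, G.Adj v u → x u = y u) → F v x = F v y) ∧
    (∀ x : V → Fin k, ∃ v : V, F v x = x v)}

open Finset

theorem card_mul_rpow_div_card_le_sum_rpow {ι : Type*} [Fintype ι] [Nonempty ι] {b : ℝ}
    (hb : 0 < b) (e : ι → ℝ) :
    Fintype.card ι * b ^ ((∑ i, e i) / Fintype.card ι) ≤ ∑ i, b ^ e i := by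
  have hι : (0 : ℝ) < Fintype.card ι := by exact_mod_cast Fintype.card_pos
  have := (convexOn_rpow_left hb).map_sum_le (t := univ) (w := fun _ => (Fintype.card ι : ℝ)⁻¹)
    (p := e) (fun _ _ => by positivity) (by simp [hι.ne']) (fun _ _ => Set.mem_univ _)
  simp only [smul_eq_mul, ← mul_sum] at this
  rw [div_eq_inv_mul]
  calc _ ≤ (Fintype.card ι : ℝ) * ((Fintype.card ι : ℝ)⁻¹ * ∑ i, b ^ e i) := by gcongr
    _ = _ := by field_simp

variable {V α : Type*} [Fintype V] [DecidableEq V] [Fintype α] [DecidableEq α]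

theorem card_subtype_forall_guess_ne [Nonempty α] (G : SimpleGraph V) (F : V → (V → α) → α)
    (hF : ∀ v x y, (∀ u, G.Adj v u → x u = y u) → F v x = F v y)
    (s : Set V) [DecidablePred (· ∈ s)] (hs : G.IsIndepSet s) :
    Fintype.card {x : V → α // ∀ v ∈ s, F v x ≠ x v} =
      Fintype.card α ^ Fintype.card {v // v ∉ s} * (Fintype.card α - 1) ^ Fintype.card s := by
  let e := (Equiv.piEquivPiSubtypeProd (· ∈ s) fun _ => α).trans (Equiv.prodComm _ _)
  -- The hats on `s` are arbitrary here: no player of the independent set `s` sees them.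
  let guess (y : {v // v ∉ s} → α) (v : s) : α :=
    F v (e.symm (y, fun _ => Classical.arbitrary α))
  have hguess (x : V → α) (v : s) : F v x = guess (e x).1 v := by
    refine hF v _ _ fun u hvu => ?_
    have hu : u ∉ s := fun hu => hs v.2 hu (G.ne_of_adj hvu) hvu
    simp [e, hu]
  let split : {x : V → α // ∀ v ∈ s, F v x ≠ x v} ≃
      Σ y : {v // v ∉ s} → α, ∀ v : s, {c : α // c ≠ guess y v} :=
    (e.subtypeEquiv fun x => ?_).trans <|
      (Equiv.subtypeProdEquivSigmaSubtype fun y z => ∀ v, z v ≠ guess y v).trans <|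
        Equiv.sigmaCongrRight fun y => Equiv.subtypePiEquivPi (p := fun v c => c ≠ guess y v)
  · rw [Fintype.card_congr split]
    simp [Fintype.card_sigma, Fintype.card_pi]
  · simp only [Subtype.forall, ← hguess]
    exact forall₂_congr fun _ _ => ne_comm

theorem card_subtype_forall_guess_ne_eq_mul [Nonempty α] (G : SimpleGraph V)
    (F : V → (V → α) → α) (hF : ∀ v x y, (∀ u, G.Adj v u → x u = y u) → F v x = F v y)
    (s : Set V) [DecidablePred (· ∈ s)] (hs : G.IsIndepSet s) :
    (Fintype.card {x : V → α // ∀ v ∈ s, F v x ≠ x v} : ℝ) =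
      Fintype.card (V → α) * (1 - 1 / (Fintype.card α : ℝ)) ^ Fintype.card s := by
  obtain ⟨t, ht⟩ := Nat.exists_eq_add_of_le (Fintype.card_subtype_le (· ∈ s))
  have hα : (Fintype.card α : ℝ) ≠ 0 := by positivity
  rw [card_subtype_forall_guess_ne G F hF s hs, Fintype.card_subtype_compl, Fintype.card_fun, ht,
    Nat.add_sub_cancel_left]
  push_cast [Nat.cast_sub Fintype.card_pos]
  rw [one_sub_div hα, div_pow, pow_add]
  field_simp

theorem sum_pow_card_colorClass_le_of_forall_exists_guess_eq [Nonempty α] {ι : Type*}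
    [Fintype ι] [DecidableEq ι] (G : SimpleGraph V) (C : G.Coloring ι) (F : V → (V → α) → α)
    (hF : ∀ v x y, (∀ u, G.Adj v u → x u = y u) → F v x = F v y)
    (hwin : ∀ x, ∃ v, F v x = x v) :
    ∑ i, (1 - 1 / (Fintype.card α : ℝ)) ^ Fintype.card (C.colorClass i) ≤ Fintype.card ι - 1 := by
  set c := 1 - 1 / (Fintype.card α : ℝ)
  set M := Fintype.card (V → α)
  have hM : (0 : ℝ) < M := by exact_mod_cast Fintype.card_pos
  have hcover : M ≤ ∑ i, Fintype.card {x : V → α // ¬ ∀ v ∈ C.colorClass i, F v x ≠ x v} := by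
    choose guesser hguesser using hwin
    rw [← Fintype.card_sigma]
    exact Fintype.card_le_of_injective
      (fun x => ⟨C (guesser x), x, fun h => h _ rfl (hguesser x)⟩)
      fun x y hxy => congrArg (·.2.1) hxy
  have hright (i : ι) :
      (Fintype.card {x : V → α // ¬ ∀ v ∈ C.colorClass i, F v x ≠ x v} : ℝ) =
        M - M * c ^ Fintype.card (C.colorClass i) := by
    rw [Fintype.card_subtype_compl, Nat.cast_sub (Fintype.card_subtype_le _),
      card_subtype_forall_guess_ne_eq_mul G F hF _ (C.isIndepSet_colorClass i)]
  have hcoverR : (M : ℝ) ≤ ∑ i : ι, (M - M * c ^ Fintype.card (C.colorClass i)) := by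
    simp only [← hright]
    exact_mod_cast hcover
  rw [sum_sub_distrib, ← mul_sum, sum_const, card_univ, nsmul_eq_mul] at hcoverR
  exact le_of_mul_le_mul_left (by linarith) hM

theorem one_sub_inv_card_le_of_forall_exists_guess_eq [Nonempty α] {ι : Type*}
    [Fintype ι] [DecidableEq ι] (G : SimpleGraph V) (C : G.Coloring ι) (F : V → (V → α) → α)
    (hF : ∀ v x y, (∀ u, G.Adj v u → x u = y u) → F v x = F v y)
    (hwin : ∀ x, ∃ v, F v x = x v) :
    1 - 1 / (Fintype.card α : ℝ) ≤
      (1 - 1 / (Fintype.card ι : ℝ)) ^ ((Fintype.card ι : ℝ) / Fintype.card V) := by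
  obtain ⟨v, -⟩ := hwin fun _ => Classical.arbitrary α
  have : Nonempty ι := ⟨C v⟩
  have hι : (0 : ℝ) < Fintype.card ι := by exact_mod_cast Fintype.card_pos
  have hV : (0 : ℝ) < Fintype.card V := by exact_mod_cast Fintype.card_pos_iff.2 ⟨v⟩
  have hr : 0 ≤ 1 - 1 / (Fintype.card ι : ℝ) :=
    sub_nonneg.2 <| div_le_one_of_le₀ (by exact_mod_cast Fintype.card_pos) hι.le
  have hc : 0 ≤ 1 - 1 / (Fintype.card α : ℝ) :=
    sub_nonneg.2 <| div_le_one_of_le₀ (by exact_mod_cast Fintype.card_pos) (Nat.cast_nonneg _)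
  rcases hc.eq_or_lt with hc0 | hc0
  · rw [← hc0]
    positivity
  have hsum : ∑ i, Fintype.card (C.colorClass i) = Fintype.card V := by
    rw [← Fintype.card_sigma]
    exact Fintype.card_congr (Equiv.sigmaFiberEquiv C)
  have hjensen :=
    card_mul_rpow_div_card_le_sum_rpow hc0 fun i => (Fintype.card (C.colorClass i) : ℝ)
  simp only [Real.rpow_natCast, ← Nat.cast_sum, hsum] at hjensen
  have hmean := hjensen.trans (sum_pow_card_colorClass_le_of_forall_exists_guess_eq G C F hF hwin)
  rw [← inv_div (Fintype.card V : ℝ), Real.le_rpow_inv_iff_of_pos hc hr (by positivity),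
    one_sub_div hι.ne', le_div_iff₀ hι, mul_comm]
  exact hmean

theorem hat_guessing_chromatic_bound_general (n : ℕ) (G : SimpleGraph (Fin n))
    (h k : ℕ) (hh : G.chromaticNumber = (h : ℕ∞))
    (hk : (k : ℝ) > 1 / (1 - ((1 : ℝ) - 1 / (h : ℝ)) ^ ((h : ℝ) / (n : ℝ)))) :
    hatGuessingNumber G ≤ k - 1 := by
  obtain ⟨C⟩ : G.Colorable h := SimpleGraph.chromaticNumber_le_iff_colorable.mp hh.le
  refine csSup_le' fun m ⟨F, hF, hwin⟩ => ?_
  rcases Nat.eq_zero_or_pos m with rfl | hm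
  · exact Nat.zero_le _
  have : Nonempty (Fin m) := Fin.pos_iff_nonempty.mp hm
  obtain ⟨v, -⟩ := hwin fun _ => ⟨0, hm⟩
  have hn : (0 : ℝ) < n := by exact_mod_cast v.pos
  have hh1 : (1 : ℝ) ≤ h := by exact_mod_cast (C v).pos
  set r := (1 - 1 / (h : ℝ)) ^ ((h : ℝ) / n)
  have hr : r < 1 := Real.rpow_lt_one (sub_nonneg.2 <| div_le_one_of_le₀ hh1 (by linarith))
    (sub_lt_self _ (by positivity)) (by positivity)
  have hrm : 1 - r ≤ 1 / m := by
    have := one_sub_inv_card_le_of_forall_exists_guess_eq G C F hF hwin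
    simp only [Fintype.card_fin] at this
    linarith
  refine Nat.le_sub_one_of_lt (Nat.lt_of_not_le fun hkm => ?_)
  have hkm : (k : ℝ) ≤ m := by exact_mod_cast hkm
  have hk' : 1 < k * (1 - r) := by rwa [gt_iff_lt, div_lt_iff₀ (by linarith)] at hk
  have : (k : ℝ) * (1 - r) ≤ m * (1 / m) :=
    mul_le_mul hkm hrm (by linarith) (Nat.cast_nonneg m)
  rw [mul_one_div_cancel (by positivity)] at this
  linarith

/-- Let `G` be a graph of order `n` with chromatic number `h` and let `k`
be a positive integer.  If `k > 1 / (1 − (1 − 1/h)^{h/n})`, then `μ(G) ≤ k − 1`. -/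
theorem hat_guessing_chromatic_bound (n : ℕ) (hn : 0 < n) (G : SimpleGraph (Fin n))
    (h k : ℕ) (hh : G.chromaticNumber = (h : ℕ∞)) (hkpos : 0 < k)
    (hk : (k : ℝ) > 1 / (1 - ((1 : ℝ) - 1 / (h : ℝ)) ^ ((h : ℝ) / (n : ℝ)))) :
    hatGuessingNumber G ≤ k - 1 :=
  hat_guessing_chromatic_bound_general n G h k hh hk
end

section
/- If an independent set S of vertices in a graph G is fixed, a strategy family with k ≥ 2 colors is fixed, and hats are assigned independently and uniformly at random, then the probability that no vertex in S guesses correctly equals ((k−1)/k)^{|S|}. -/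
/-!
Because `S` is independent, the guess of a vertex of `S` depends only on the colours outside `S`.
Once those colours are fixed, each vertex of `S` loses exactly when it avoids one prescribed
colour, independently of the others, so `k - 1` of its `k` colours are losing.
-/

open Finset

theorem Nat.card_pi_ne {ι α : Type*} [Fintype ι] [Finite α] (c : ι → α) :
    Nat.card {z : ι → α // ∀ i, z i ≠ c i} = (Nat.card α - 1) ^ Fintype.card ι := by
  classical
  have := Fintype.ofFinite α
  rw [Nat.card_congr (Equiv.subtypePiEquivPi (p := fun i a => a ≠ c i)), Nat.card_pi]
  simp [Nat.card_eq_fintype_card, Fintype.card_subtype_compl]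

theorem Nat.card_subtype_prod_of_card_fiber {A B : Type*} [Finite A] [Finite B]
    (P : A → B → Prop) (n : ℕ) (h : ∀ b, Nat.card {a // P a b} = n) :
    Nat.card {p : A × B // P p.1 p.2} = n * Nat.card B := by
  have := Fintype.ofFinite B
  rw [← Nat.card_congr ((Equiv.prodComm B A).subtypeEquiv
      (p := fun q => P q.2 q.1) (q := fun p => P p.1 p.2) fun _ => Iff.rfl),
    Nat.card_congr (Equiv.subtypeProdEquivSigmaSubtype fun b a => P a b), Nat.card_sigma]
  simp [h, Nat.card_eq_fintype_card, mul_comm]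

theorem card_forall_guess_ne_of_ignores_mem {V α : Type*} [Fintype V] [Finite α] [Nonempty α]
    (S : Finset V) (g : V → (V → α) → α)
    (hg : ∀ v ∈ S, ∀ x y : V → α, (∀ u ∉ S, x u = y u) → g v x = g v y) :
    Nat.card {x : V → α // ∀ v ∈ S, g v x ≠ x v}
      = (Nat.card α - 1) ^ #S * Nat.card α ^ (Fintype.card V - #S) := by
  classical
  let e := Equiv.piEquivPiSubtypeProd (· ∈ S) (fun _ => α)
  have glue_of_mem (z y) (v : V) (hv : v ∈ S) : e.symm (z, y) v = z ⟨v, hv⟩ := by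
    simp [e, hv]
  have guess_eq (z z' y) : ∀ v ∈ S, g v (e.symm (z, y)) = g v (e.symm (z', y)) :=
    fun v hv => hg v hv _ _ fun u hu => by simp [e, hu]
  let z₀ : S → α := fun _ => Classical.arbitrary α
  have fiber (y : {v // v ∉ S} → α) :
      Nat.card {z // ∀ v ∈ S, g v (e.symm (z, y)) ≠ e.symm (z, y) v}
        = (Nat.card α - 1) ^ #S := by
    rw [← Fintype.card_coe S, ← Nat.card_pi_ne fun v : S => g v (e.symm (z₀, y))]
    refine Nat.card_congr (Equiv.subtypeEquivRight fun z => ?_)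
    refine ⟨fun h v => ?_, fun h v hv => ?_⟩
    · rw [← guess_eq z z₀ y v v.2, ← glue_of_mem z y v v.2]
      exact (h v v.2).symm
    · rw [guess_eq z z₀ y v hv, glue_of_mem z y v hv]
      exact (h ⟨v, hv⟩).symm
  calc Nat.card {x : V → α // ∀ v ∈ S, g v x ≠ x v}
      = Nat.card {p // ∀ v ∈ S, g v (e.symm (p.1, p.2)) ≠ e.symm (p.1, p.2) v} :=
        Nat.card_congr (e.subtypeEquiv fun x => by simp)
    _ = (Nat.card α - 1) ^ #S * Nat.card ({v // v ∉ S} → α) :=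
        Nat.card_subtype_prod_of_card_fiber _ _ fiber
    _ = (Nat.card α - 1) ^ #S * Nat.card α ^ (Fintype.card V - #S) := by
        rw [Nat.card_fun, Nat.card_eq_fintype_card (α := {v // v ∉ S}),
          Fintype.card_subtype_compl, Fintype.card_coe]

/-- If `S` is an independent set of a graph `G`, a strategy family with
`k ≥ 2` colors is fixed, and hats are assigned independently and uniformly at random,
then the probability that no vertex of `S` guesses correctly equals `((k−1)/k)^{|S|}`.
(Probability expressed as the proportion of colorings.) -/
theorem hat_guessing_independent_set_probability {V : Type*} [Fintype V]
    (G : SimpleGraph V) (k : ℕ) (hk : 2 ≤ k) (S : Finset V)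
    (hind : ∀ u ∈ S, ∀ w ∈ S, ¬ G.Adj u w)
    (F : V → (V → Fin k) → Fin k)
    (hF : ∀ v : V, ∀ x y : V → Fin k, (∀ u : V, G.Adj v u → x u = y u) → F v x = F v y) :
    (Nat.card {x : V → Fin k // ∀ v ∈ S, F v x ≠ x v} : ℝ) / (k : ℝ) ^ (Fintype.card V)
      = (((k : ℝ) - 1) / k) ^ S.card := by
  have : Nonempty (Fin k) := ⟨⟨0, by omega⟩⟩
  have guess_ignores_S :
      ∀ v ∈ S, ∀ x y : V → Fin k, (∀ u ∉ S, x u = y u) → F v x = F v y :=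
    fun v hv x y hxy => hF v x y fun u hvu => hxy u fun hu => hind v hv u hu hvu
  rw [card_forall_guess_ne_of_ignores_mem S F guess_ignores_S, Nat.card_fin,
    ← pow_sub_mul_pow (k : ℝ) (card_le_univ S)]
  push_cast [Nat.cast_sub (by omega : 1 ≤ k)]
  rw [div_pow]
  field_simp
end

section
/- Every graph G with maximum degree Δ satisfies μ(G) ≤ e(Δ+1), i.e., if the number of colors k satisfies e·(Δ+1)·(1/k) ≤ 1 then for every strategy family there is a coloring for which all guesses are wrong. -/
/-!
Counting form of the symmetric local lemma. Let `avoiding A S` be the set of outcomes lying in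
no `A v` with `v ∈ S`. By strong induction on `S`, each `A v` with `v ∉ S` occupies at most an
`x`-fraction of `avoiding A S`: splitting `S` into the neighbours of `v` and the rest, `A v` has
relative size at most `p` on the outcomes avoiding the rest, and putting back the at most `d`
neighbours one at a time (induction hypothesis) keeps a `(1 - x) ^ d` fraction of them, so
`p ≤ x (1 - x) ^ d` suffices. Adding all vertices one at a time then leaves a `(1 - x) ^ |V|`
fraction of the outcomes, which is positive when `x < 1`.

In the hat game `A v` is the set of colourings on which `v` guesses correctly. Once `S` contains
neither `v` nor a neighbour of `v`, recolouring `v` preserves `avoiding A S` and the guess of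
`v`, so exactly a `1 / k` fraction of `avoiding A S` lies in `A v`. The choice `x = 1 / (Δ + 2)`
works because `(1 + 1 / (Δ + 1)) ^ (Δ + 1) ≤ e`.
-/

open Finset

section LocalLemma

variable {Ω V : Type*} [Fintype Ω] [DecidableEq Ω] (A : V → Finset Ω)

def avoiding (S : Finset V) : Finset Ω := univ.filter fun ω => ∀ v ∈ S, ω ∉ A v

variable {A}

@[simp]
lemma mem_avoiding {S : Finset V} {ω : Ω} : ω ∈ avoiding A S ↔ ∀ v ∈ S, ω ∉ A v := by
  simp [avoiding]

@[simp]
lemma avoiding_empty : avoiding A ∅ = univ := by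
  ext; simp

lemma avoiding_anti {S T : Finset V} (h : S ⊆ T) : avoiding A T ⊆ avoiding A S :=
  fun _ hω => mem_avoiding.2 fun v hv => mem_avoiding.1 hω v (h hv)

lemma avoiding_insert [DecidableEq V] (a : V) (S : Finset V) :
    avoiding A (insert a S) = avoiding A S \ A a := by
  ext; simp [and_comm]

lemma one_sub_mul_card_avoiding_le_card_avoiding_insert [DecidableEq V] {x : ℝ} {a : V}
    {S : Finset V} (h : (#(avoiding A S ∩ A a) : ℝ) ≤ x * #(avoiding A S)) :
    (1 - x) * #(avoiding A S) ≤ #(avoiding A (insert a S)) := by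
  have hsplit := card_sdiff_add_card_inter (avoiding A S) (A a)
  rw [← Nat.cast_inj (R := ℝ), Nat.cast_add] at hsplit
  rw [avoiding_insert]
  linarith

lemma pow_mul_card_avoiding_le_card_avoiding_union [DecidableEq V] {x : ℝ} (hx : x ≤ 1)
    (T U : Finset V)
    (h : ∀ U' ⊆ U, ∀ a ∈ U, a ∉ U' →
      (#(avoiding A (T ∪ U') ∩ A a) : ℝ) ≤ x * #(avoiding A (T ∪ U'))) :
    (1 - x) ^ #U * #(avoiding A T) ≤ #(avoiding A (T ∪ U)) := by
  induction U using Finset.induction_on with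
  | empty => simp
  | @insert a U ha ih =>
    have ih := ih fun U' hU' b hb => h U' (hU'.trans (subset_insert a U)) b (mem_insert_of_mem hb)
    calc (1 - x) ^ #(insert a U) * #(avoiding A T)
        = (1 - x) * ((1 - x) ^ #U * #(avoiding A T)) := by
          rw [card_insert_of_notMem ha, pow_succ']; ring
      _ ≤ (1 - x) * #(avoiding A (T ∪ U)) := by gcongr
      _ ≤ #(avoiding A (T ∪ insert a U)) := by
        rw [union_insert]
        exact one_sub_mul_card_avoiding_le_card_avoiding_insert
          (h U (subset_insert a U) a (mem_insert_self a U) ha)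

variable [Fintype V] [DecidableEq V] (G : SimpleGraph V) [DecidableRel G.Adj] {d : ℕ} {p x : ℝ}

theorem card_avoiding_inter_le (hx0 : 0 ≤ x) (hx1 : x ≤ 1) (hdeg : ∀ v, G.degree v ≤ d)
    (hp : p ≤ x * (1 - x) ^ d)
    (hA : ∀ S v, v ∉ S → (∀ w ∈ S, ¬G.Adj v w) →
      (#(avoiding A S ∩ A v) : ℝ) ≤ p * #(avoiding A S))
    (S : Finset V) : ∀ v ∉ S, (#(avoiding A S ∩ A v) : ℝ) ≤ x * #(avoiding A S) := by
  induction S using Finset.strongInductionOn with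
  | _ S IH =>
  intro v hv
  set near := S.filter (G.Adj v)
  set far := S.filter fun w => ¬G.Adj v w
  have hS : far ∪ near = S := by rw [union_comm]; exact filter_union_filter_not_eq _ _
  have hnear : #near ≤ d :=
    calc #near ≤ #(G.neighborFinset v) :=
          card_le_card fun w hw => by simpa using (mem_filter.1 hw).2
      _ = G.degree v := G.card_neighborFinset_eq_degree v
      _ ≤ d := hdeg v
  have hfar := hA far v (fun h => hv (filter_subset _ _ h)) fun w hw => (mem_filter.1 hw).2
  have hstep : ∀ U' ⊆ near, ∀ a ∈ near, a ∉ U' →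
      (#(avoiding A (far ∪ U') ∩ A a) : ℝ) ≤ x * #(avoiding A (far ∪ U')) := by
    intro U' hU' a ha haU'
    have ha' : a ∉ far ∪ U' := by
      simp only [mem_union, not_or]
      exact ⟨fun h => (mem_filter.1 h).2 (mem_filter.1 ha).2, haU'⟩
    refine IH _ ((ssubset_iff_of_subset ?_).2 ⟨a, (mem_filter.1 ha).1, ha'⟩) a ha'
    exact union_subset (filter_subset _ _) (hU'.trans (filter_subset _ _))
  have hchain := pow_mul_card_avoiding_le_card_avoiding_union hx1 far near hstep
  rw [hS] at hchain
  calc (#(avoiding A S ∩ A v) : ℝ) ≤ #(avoiding A far ∩ A v) := by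
        gcongr; exact avoiding_anti (filter_subset _ _)
    _ ≤ x * (1 - x) ^ d * #(avoiding A far) := by
        refine hfar.trans ?_
        gcongr
    _ ≤ x * ((1 - x) ^ #near * #(avoiding A far)) := by
        rw [← mul_assoc]
        gcongr x * ?_ * _
        exact pow_le_pow_of_le_one (by linarith) (by linarith) hnear
    _ ≤ x * #(avoiding A S) := by gcongr

theorem pow_mul_card_le_card_avoiding (hx0 : 0 ≤ x) (hx1 : x ≤ 1) (hdeg : ∀ v, G.degree v ≤ d)
    (hp : p ≤ x * (1 - x) ^ d)
    (hA : ∀ S v, v ∉ S → (∀ w ∈ S, ¬G.Adj v w) →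
      (#(avoiding A S ∩ A v) : ℝ) ≤ p * #(avoiding A S))
    (S : Finset V) : (1 - x) ^ #S * Fintype.card Ω ≤ #(avoiding A S) := by
  simpa using pow_mul_card_avoiding_le_card_avoiding_union hx1 ∅ S fun U' _ a _ haU' =>
    card_avoiding_inter_le G hx0 hx1 hdeg hp hA _ a (by simpa)

theorem exists_forall_notMem_of_card_avoiding_inter_le [Nonempty Ω] (hx0 : 0 ≤ x) (hx1 : x < 1)
    (hdeg : ∀ v, G.degree v ≤ d) (hp : p ≤ x * (1 - x) ^ d)
    (hA : ∀ S v, v ∉ S → (∀ w ∈ S, ¬G.Adj v w) →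
      (#(avoiding A S ∩ A v) : ℝ) ≤ p * #(avoiding A S)) :
    ∃ ω, ∀ v, ω ∉ A v := by
  have hx : 0 < 1 - x := by linarith
  have hpos : (0 : ℝ) < #(avoiding A univ) :=
    (pow_mul_card_le_card_avoiding G hx0 hx1.le hdeg hp hA univ).trans_lt'
      (mul_pos (pow_pos hx _) (by exact_mod_cast Fintype.card_pos))
  obtain ⟨ω, hω⟩ := card_pos.1 (by exact_mod_cast hpos)
  exact ⟨ω, fun v => mem_avoiding.1 hω v (mem_univ v)⟩

end LocalLemma

section HatGuessing

open Function

variable {V α : Type*} [DecidableEq V]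

lemma apply_update_of_not_adj (G : SimpleGraph V) {F : V → (V → α) → α}
    (hF : ∀ v x y, (∀ u, G.Adj v u → x u = y u) → F v x = F v y) {w v : V} (h : ¬G.Adj w v)
    (x : V → α) (c : α) : F w (update x v c) = F w x :=
  hF w _ _ fun u hu => update_of_ne (by rintro rfl; exact h hu) _ _

variable [Fintype α] [DecidableEq α]

lemma card_filter_eq_apply_mul_card (s : Finset (V → α)) (v : V) (g : (V → α) → α)
    (hs : ∀ x c, update x v c ∈ s ↔ x ∈ s) (hg : ∀ x c, g (update x v c) = g x) :
    #(s.filter fun x => g x = x v) * Fintype.card α = #s := by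
  rw [← card_univ, ← card_product]
  symm
  refine card_nbij' (fun x => (update x v (g x), x v)) (fun y => update y.1 v y.2) ?_ ?_ ?_ ?_ <;>
    intro _ _ <;> simp_all

variable [Fintype V]

def guessesCorrectly (F : V → (V → α) → α) (v : V) : Finset (V → α) :=
  univ.filter fun x => F v x = x v

lemma card_avoiding_inter_guessesCorrectly_mul_card (G : SimpleGraph V) {F : V → (V → α) → α}
    (hF : ∀ v x y, (∀ u, G.Adj v u → x u = y u) → F v x = F v y) {S : Finset V} {v : V}
    (hvS : v ∉ S) (hS : ∀ w ∈ S, ¬G.Adj v w) :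
    #(avoiding (guessesCorrectly F) S ∩ guessesCorrectly F v) * Fintype.card α
      = #(avoiding (guessesCorrectly F) S) := by
  rw [guessesCorrectly, inter_filter, inter_univ]
  apply card_filter_eq_apply_mul_card
  · intro x c
    simp only [mem_avoiding, guessesCorrectly, mem_filter, mem_univ, true_and]
    refine forall₂_congr fun w hw => ?_
    rw [apply_update_of_not_adj G hF (fun h => hS w hw h.symm),
      update_of_ne (ne_of_mem_of_not_mem hw hvS)]
  · exact apply_update_of_not_adj G hF (G.loopless.irrefl v)

end HatGuessing

open Real in
lemma le_inv_mul_one_sub_inv_pow (d : ℕ) {p : ℝ} (h : exp 1 * (d + 1) * p ≤ 1) :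
    p ≤ ((d : ℝ) + 2)⁻¹ * (1 - ((d : ℝ) + 2)⁻¹) ^ d := by
  set n : ℝ := d + 1
  have hn : 0 < n := by positivity
  have hbound : (1 + n⁻¹) ^ (d + 1) ≤ exp 1 := by
    calc (1 + n⁻¹) ^ (d + 1) ≤ exp n⁻¹ ^ (d + 1) := by
          gcongr; linarith [add_one_le_exp n⁻¹]
      _ = exp 1 := by
          rw [← exp_nat_mul]
          exact congrArg exp (by push_cast; exact mul_inv_cancel₀ hn.ne')
  have htwo : (d : ℝ) + 2 = n + 1 := by ring
  calc p ≤ (exp 1 * n)⁻¹ := by rw [← one_div, le_div_iff₀ (by positivity)]; linarith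
    _ ≤ (n * (1 + n⁻¹) ^ (d + 1))⁻¹ := inv_anti₀ (by positivity) (by rw [mul_comm]; gcongr)
    _ = (n + 1)⁻¹ * (1 - (n + 1)⁻¹) ^ d := by
        rw [show 1 + n⁻¹ = (n + 1) / n by field_simp,
          show 1 - (n + 1)⁻¹ = n / (n + 1) by field_simp; ring, div_pow, div_pow]
        field_simp
        ring
    _ = ((d : ℝ) + 2)⁻¹ * (1 - ((d : ℝ) + 2)⁻¹) ^ d := by rw [htwo]

/-- Every graph `G` with maximum degree `Δ` satisfies `μ(G) ≤ e(Δ+1)`: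
if the number of colors `k` satisfies `e·(Δ+1)·(1/k) ≤ 1`, then for every strategy
family there is a coloring for which all guesses are wrong. -/
theorem hat_guessing_LLL_bound {V : Type*} [Fintype V] (G : SimpleGraph V)
    [DecidableRel G.Adj] (k : ℕ) (hkpos : 0 < k)
    (hk : Real.exp 1 * ((G.maxDegree : ℝ) + 1) * (1 / (k : ℝ)) ≤ 1)
    (F : V → (V → Fin k) → Fin k)
    (hF : ∀ v : V, ∀ x y : V → Fin k, (∀ u : V, G.Adj v u → x u = y u) → F v x = F v y) :
    ∃ x : V → Fin k, ∀ v : V, F v x ≠ x v := by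
  classical
  have : Nonempty (V → Fin k) := ⟨fun _ => ⟨0, hkpos⟩⟩
  have hindep (S : Finset V) (v : V) (hvS : v ∉ S) (hS : ∀ w ∈ S, ¬G.Adj v w) :
      (#(avoiding (guessesCorrectly F) S ∩ guessesCorrectly F v) : ℝ)
        ≤ 1 / k * #(avoiding (guessesCorrectly F) S) := by
    rw [← card_avoiding_inter_guessesCorrectly_mul_card G hF hvS hS, Fintype.card_fin,
      Nat.cast_mul, one_div_mul_eq_div, mul_div_cancel_right₀ _ (by positivity)]
  obtain ⟨x, hx⟩ := exists_forall_notMem_of_card_avoiding_inter_le G (by positivity)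
    (inv_lt_one_of_one_lt₀ (by linarith)) G.degree_le_maxDegree
    (le_inv_mul_one_sub_inv_pow _ hk) hindep
  exact ⟨x, fun v => by simpa [guessesCorrectly] using hx v⟩
end

section
/- Let T be a tree rooted at r on n ≥ 1 vertices, let k ≥ 3, and fix strategies F_i for all vertices. For every color c that is not dominant for F_r, there exists a coloring f of T with f(r) = c such that F_i(f) ≠ f(i) for every vertex i. Consequently, every tree T with at least two vertices satisfies μ(T) = 2. -/
/-- A color `d` is dominant for a strategy `F` if `F⁻¹(d)` contains a combinatorial cube
all of whose components have size at least `k−1`. -/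
def DominantColor {V : Type*} [Fintype V] {k : ℕ} (F : (V → Fin k) → Fin k)
    (d : Fin k) : Prop :=
  ∃ C : V → Finset (Fin k), (∀ i : V, k - 1 ≤ (C i).card) ∧
    ∀ x : V → Fin k, (∀ i : V, x i ∈ C i) → F x = d

/-!
Orient the tree towards `r`. Call a color `d` good at `u`, given the color `a` of the parent of
`u`, if the subtree of `u` can be colored with `d` at `u` so that all of its vertices guess wrong.
From the leaves up, at most one color is bad at each vertex. At the root, a non-dominant color
`c` admits good colors at the children on which `F_r` does not answer `c`. As two colors cannot
both be dominant when `k ≥ 3`, no strategy on a tree wins with three colors, while two colors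
win on any edge.
-/

open Finset

lemma Finset.inter_nonempty_of_sub_one_le_card {k : ℕ} (hk : 3 ≤ k) {s t : Finset (Fin k)}
    (hs : k - 1 ≤ #s) (ht : k - 1 ≤ #t) : (s ∩ t).Nonempty :=
  inter_nonempty_of_card_lt_card_add_card (subset_univ s) (subset_univ t) (by simp; omega)

lemma Finset.sub_one_le_card_of_card_compl_le_one {k : ℕ} {s : Finset (Fin k)}
    (hs : #sᶜ ≤ 1) : k - 1 ≤ #s := by
  have := card_compl_add_card s
  rw [Fintype.card_fin] at this
  omega

section DominantColor

variable {V : Type*} [Fintype V] {k : ℕ}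

lemma DominantColor.eq (hk : 3 ≤ k) {F : (V → Fin k) → Fin k} {d₁ d₂ : Fin k}
    (h₁ : DominantColor F d₁) (h₂ : DominantColor F d₂) : d₁ = d₂ := by
  obtain ⟨C₁, hC₁, hF₁⟩ := h₁
  obtain ⟨C₂, hC₂, hF₂⟩ := h₂
  choose x hx using fun i => inter_nonempty_of_sub_one_le_card hk (hC₁ i) (hC₂ i)
  rw [← hF₁ x fun i => (mem_inter.1 (hx i)).1, hF₂ x fun i => (mem_inter.1 (hx i)).2]

lemma exists_not_dominantColor (hk : 3 ≤ k) (F : (V → Fin k) → Fin k) :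
    ∃ c, ¬ DominantColor F c := by
  by_contra! h
  have := DominantColor.eq hk (h ⟨0, by omega⟩) (h ⟨1, by omega⟩)
  simp [Fin.ext_iff] at this

end DominantColor

namespace SimpleGraph

variable {V : Type*} {k : ℕ}

def IsLocalStrategy (G : SimpleGraph V) (F : V → (V → Fin k) → Fin k) : Prop :=
  ∀ v x y, (∀ u, G.Adj v u → x u = y u) → F v x = F v y

def HasWinningStrategy (G : SimpleGraph V) (k : ℕ) : Prop :=
  ∃ F : V → (V → Fin k) → Fin k, G.IsLocalStrategy F ∧ ∀ x, ∃ v, F v x = x v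

lemma Adj.hasWinningStrategy_two {G : SimpleGraph V} {a b : V} (hab : G.Adj a b) :
    G.HasWinningStrategy 2 := by
  classical
  refine ⟨fun v x => if v = a then x b else if v = b then x a + 1 else 0, ?_, fun x => ?_⟩
  · intro v x y hxy
    by_cases hva : v = a
    · subst hva
      simp [hxy b hab]
    · by_cases hvb : v = b
      · subst hvb
        simp [hva, hxy a hab.symm]
      · simp [hva, hvb]
  · have : ∀ p q : Fin 2, q = p ∨ q = p + 1 := by decide
    rcases this (x a) (x b) with h | h
    · exact ⟨a, by simp [h]⟩
    · exact ⟨b, by simp [hab.ne', h]⟩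

/-- `T` oriented towards `root`; `depth` only serves to rule out cycles of `parent`. -/
structure RootedParentMap (T : SimpleGraph V) (root : V) where
  parent : V → V
  depth : V → ℕ
  parent_root : parent root = root
  depth_parent_lt : ∀ u, u ≠ root → depth (parent u) < depth u
  adj : ∀ u v, T.Adj u v → parent u = v ∨ parent v = u

lemma IsTree.nonempty_rootedParentMap {T : SimpleGraph V} (hT : T.IsTree) (r : V) :
    Nonempty (T.RootedParentMap r) := by
  choose p hp hlen using hT.connected.exists_path_of_dist r
  refine ⟨⟨fun u => (p u).penultimate, T.dist r, ?_, fun u hu => ?_, fun u v huv => ?_⟩⟩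
  · have : (p r).Nil := Walk.length_eq_zero_iff.1 (by simp [hlen])
    rw [Walk.eq_nil_iff_nil.2 this, Walk.penultimate_nil]
  · have := Walk.length_dropLast_add_one (Walk.not_nil_of_ne (p := p u) (Ne.symm hu))
    have := dist_le (p u).dropLast
    have := hlen u
    omega
  · by_cases hu : u ∈ (p v).support
    · exact .inr (hT.isAcyclic.eq_penultimate_of_adj_end (hp v) huv.symm hu).symm
    · refine .inl (hT.isAcyclic.eq_penultimate_of_adj_end (hp u) huv ?_).symm
      exact hT.isAcyclic.mem_support_of_ne_mem_support_of_adj_of_isPath (hp u) (hp v) huv hu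

namespace RootedParentMap

variable {T : SimpleGraph V} {r : V} (P : T.RootedParentMap r)

def subtree (u : V) : Set V := {i | ∃ n, P.parent^[n] i = u}

def IsChild (w u : V) : Prop := P.parent w = u ∧ w ≠ u

lemma mem_subtree_self (u : V) : u ∈ P.subtree u := ⟨0, rfl⟩

variable {P}

lemma mem_subtree_of_parent_mem {u i : V} (hi : P.parent i ∈ P.subtree u) :
    i ∈ P.subtree u := by
  obtain ⟨n, hn⟩ := hi
  exact ⟨n + 1, hn⟩

lemma parent_mem_subtree {u i : V} (hi : i ∈ P.subtree u) (hiu : i ≠ u) :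
    P.parent i ∈ P.subtree u := by
  obtain ⟨_ | n, hn⟩ := hi
  · exact absurd hn hiu
  · exact ⟨n, hn⟩

lemma subtree_subset {u w : V} (h : u ∈ P.subtree w) : P.subtree u ⊆ P.subtree w := by
  rintro i ⟨m, rfl⟩
  obtain ⟨n, rfl⟩ := h
  exact ⟨n + m, Function.iterate_add_apply _ _ _ _⟩

lemma mem_subtree_or_mem_subtree {u w i : V} (hu : i ∈ P.subtree u) (hw : i ∈ P.subtree w) :
    u ∈ P.subtree w ∨ w ∈ P.subtree u := by
  obtain ⟨m, rfl⟩ := hu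
  obtain ⟨n, rfl⟩ := hw
  rcases le_total m n with h | h
  · exact .inl ⟨n - m, by rw [← Function.iterate_add_apply, Nat.sub_add_cancel h]⟩
  · exact .inr ⟨m - n, by rw [← Function.iterate_add_apply, Nat.sub_add_cancel h]⟩

lemma depth_parent_le (u : V) : P.depth (P.parent u) ≤ P.depth u := by
  by_cases hu : u = r
  · rw [hu, P.parent_root]
  · exact (P.depth_parent_lt u hu).le

lemma depth_le_of_mem_subtree {u i : V} (h : i ∈ P.subtree u) : P.depth u ≤ P.depth i := by
  obtain ⟨n, rfl⟩ := h
  induction n with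
  | zero => rfl
  | succ n ih =>
    rw [Function.iterate_succ_apply']
    exact (depth_parent_le _).trans ih

variable (P) in
lemma mem_subtree_root (i : V) : i ∈ P.subtree r := by
  by_cases hi : i = r
  · exact hi ▸ P.mem_subtree_self r
  · exact mem_subtree_of_parent_mem (mem_subtree_root (P.parent i))
termination_by P.depth i
decreasing_by exact P.depth_parent_lt i hi

lemma IsChild.mem_subtree {w u : V} (h : P.IsChild w u) : w ∈ P.subtree u := ⟨1, h.1⟩

lemma IsChild.notMem_subtree {w u : V} (h : P.IsChild w u) : u ∉ P.subtree w := by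
  have hw : w ≠ r := fun hw => h.2 (by rw [← h.1, hw, P.parent_root])
  have := P.depth_parent_lt w hw
  rw [h.1] at this
  exact fun hu => (depth_le_of_mem_subtree hu).not_gt this

lemma IsChild.eq_of_mem_subtree {w₁ w₂ u i : V} (h₁ : P.IsChild w₁ u) (h₂ : P.IsChild w₂ u)
    (hi₁ : i ∈ P.subtree w₁) (hi₂ : i ∈ P.subtree w₂) : w₁ = w₂ := by
  by_contra hne
  rcases mem_subtree_or_mem_subtree hi₁ hi₂ with h | h
  · exact h₂.notMem_subtree (h₁.1 ▸ parent_mem_subtree h hne)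
  · exact h₁.notMem_subtree (h₂.1 ▸ parent_mem_subtree h (Ne.symm hne))

lemma exists_isChild_of_mem_subtree {u i : V} (hi : i ∈ P.subtree u) (hiu : i ≠ u) :
    ∃ w, P.IsChild w u ∧ i ∈ P.subtree w := by
  obtain ⟨n, hn⟩ := hi
  induction n generalizing i with
  | zero => exact absurd hn hiu
  | succ n ih =>
    by_cases hp : P.parent i = u
    · exact ⟨i, ⟨hp, hiu⟩, P.mem_subtree_self i⟩
    · obtain ⟨w, hw, hpw⟩ := ih hp hn
      exact ⟨w, hw, mem_subtree_of_parent_mem hpw⟩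

lemma IsChild.ncard_subtree_lt [Finite V] {w u : V} (h : P.IsChild w u) :
    (P.subtree w).ncard < (P.subtree u).ncard :=
  Set.ncard_lt_ncard <| (Set.ssubset_iff_of_subset (subtree_subset h.mem_subtree)).2
    ⟨u, P.mem_subtree_self u, h.notMem_subtree⟩

lemma isChild_or_isChild_of_adj {u v : V} (h : T.Adj u v) : P.IsChild u v ∨ P.IsChild v u :=
  (P.adj u v h).imp (⟨·, h.ne⟩) (⟨·, h.ne'⟩)

lemma mem_subtree_of_adj {w i j : V} (h : T.Adj i j) (hi : i ∈ P.subtree w) :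
    j ∈ P.subtree w ∨ i = w ∧ j = P.parent w := by
  rcases isChild_or_isChild_of_adj h with hij | hji
  · by_cases hiw : i = w
    · exact .inr ⟨hiw, hiw ▸ hij.1.symm⟩
    · exact .inl (hij.1 ▸ parent_mem_subtree hi hiw)
  · exact .inl (mem_subtree_of_parent_mem (hji.1 ▸ hi))

variable (P) (F : V → (V → Fin k) → Fin k)

/-- `a` stands for the color of the parent of `u`, the only vertex outside the subtree of `u`
that a vertex of the subtree can see. -/
def IsGoodColor (u : V) (a d : Fin k) : Prop :=
  ∃ f : V → Fin k, f u = d ∧ (∀ i ∉ P.subtree u, f i = a) ∧ ∀ i ∈ P.subtree u, F i f ≠ f i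

open Classical in
noncomputable def goodColors (u : V) (a : Fin k) : Finset (Fin k) :=
  univ.filter (P.IsGoodColor F u a)

open Classical in
noncomputable def childView (u : V) (x : V → Fin k) (a : Fin k) : V → Fin k :=
  fun i => if P.IsChild i u then x i else a

variable {P F}

lemma mem_goodColors {u : V} {a d : Fin k} : d ∈ P.goodColors F u a ↔ P.IsGoodColor F u a d := by
  simp [goodColors]

lemma exists_glued_coloring (u : V) (a d : Fin k) (g : V → V → Fin k) :
    ∃ f : V → Fin k, f u = d ∧ (∀ i ∉ P.subtree u, f i = a) ∧
      ∀ w, P.IsChild w u → ∀ i ∈ P.subtree w, f i = g w i := by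
  classical
  let branch (i : V) := ∃ w, P.IsChild w u ∧ i ∈ P.subtree w
  refine ⟨fun i => if i = u then d else if h : branch i then g h.choose i else a, by simp,
    fun i hi => ?_, fun w hw i hi => ?_⟩
  · have hiu : i ≠ u := fun h => hi (h ▸ P.mem_subtree_self u)
    have : ¬ branch i := fun ⟨w, hw, hiw⟩ => hi (subtree_subset hw.mem_subtree hiw)
    simp [hiu, this]
  · have hiu : i ≠ u := by
      rintro rfl
      exact hw.notMem_subtree hi
    have h : branch i := ⟨w, hw, hi⟩
    simp only [if_neg hiu, dif_pos h]
    rw [h.choose_spec.1.eq_of_mem_subtree hw h.choose_spec.2 hi]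

theorem isGoodColor_of_childView (hF : T.IsLocalStrategy F) {u : V} {a d : Fin k}
    {x : V → Fin k} (hx : ∀ w, P.IsChild w u → P.IsGoodColor F w d (x w))
    (hu : F u (P.childView u x a) ≠ d) : P.IsGoodColor F u a d := by
  have : Nonempty (V → Fin k) := ⟨x⟩
  choose! g hg using hx
  obtain ⟨f, hfu, hfa, hfg⟩ := exists_glued_coloring u a d g
  refine ⟨f, hfu, hfa, fun i hi => ?_⟩
  by_cases hiu : i = u
  · subst hiu
    suffices F i f = F i (P.childView i x a) by rwa [this, hfu]
    refine hF i _ _ fun j hj => ?_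
    rcases isChild_or_isChild_of_adj hj with hij | hji
    · have hj : j ∉ P.subtree i := hij.notMem_subtree
      have : ¬ P.IsChild j i := fun hji => hj hji.mem_subtree
      simp [childView, this, hfa j hj]
    · simp [childView, hji, hfg j hji j (P.mem_subtree_self j), (hg j hji).1]
  · obtain ⟨w, hw, hiw⟩ := exists_isChild_of_mem_subtree hi hiu
    obtain ⟨-, hgd, hgF⟩ := hg w hw
    suffices F i f = F i (g w) by rw [this, hfg w hw i hiw]; exact hgF i hiw
    refine hF i _ _ fun j hj => ?_
    rcases mem_subtree_of_adj hj hiw with hjw | ⟨rfl, rfl⟩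
    · exact hfg w hw j hjw
    · rw [hw.1, hfu, hgd u hw.notMem_subtree]

/-- At most one color is bad: for bad colors `d₁, d₂`, give every child a color good for both
(by induction and pigeonhole); the guess of `u` then has to be both `d₁` and `d₂`. -/
theorem sub_one_le_card_goodColors [Finite V] (hF : T.IsLocalStrategy F) (hk : 3 ≤ k) (u : V)
    (a : Fin k) : k - 1 ≤ #(P.goodColors F u a) := by
  refine sub_one_le_card_of_card_compl_le_one (card_le_one.2 fun d₁ h₁ d₂ h₂ => ?_)
  simp only [mem_compl, mem_goodColors] at h₁ h₂
  have common (w : V) (hw : P.IsChild w u) :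
      (P.goodColors F w d₁ ∩ P.goodColors F w d₂).Nonempty :=
    inter_nonempty_of_sub_one_le_card hk (sub_one_le_card_goodColors hF hk w d₁)
      (sub_one_le_card_goodColors hF hk w d₂)
  have : NeZero k := ⟨by omega⟩
  choose! x hx using common
  have guess (d : Fin k) (hd : ¬ P.IsGoodColor F u a d)
      (hxd : ∀ w, P.IsChild w u → x w ∈ P.goodColors F w d) : F u (P.childView u x a) = d :=
    not_not.1 fun h => hd (isGoodColor_of_childView hF (fun w hw => mem_goodColors.1 (hxd w hw)) h)
  rw [← guess d₁ h₁ fun w hw => (mem_inter.1 (hx w hw)).1,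
    guess d₂ h₂ fun w hw => (mem_inter.1 (hx w hw)).2]
termination_by (P.subtree u).ncard
decreasing_by all_goals exact hw.ncard_subtree_lt

variable (P) in
include P in
theorem exists_demonic_of_not_dominantColor [Fintype V] (hF : T.IsLocalStrategy F) (hk : 3 ≤ k)
    {c : Fin k} (hc : ¬ DominantColor (F r) c) : ∃ f : V → Fin k, f r = c ∧ ∀ i, F i f ≠ f i := by
  classical
  obtain ⟨x, hx, hxc⟩ : ∃ x : V → Fin k,
      (∀ i, x i ∈ if P.IsChild i r then P.goodColors F i c else univ) ∧ F r x ≠ c := by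
    by_contra! h
    refine hc ⟨_, fun i => ?_, h⟩
    split_ifs
    · exact sub_one_le_card_goodColors hF hk i c
    · simp
  have hgood (w : V) (hw : P.IsChild w r) : P.IsGoodColor F w c (x w) := by
    simpa [hw, mem_goodColors] using hx w
  have hview : F r (P.childView r x c) = F r x := by
    refine hF r _ _ fun j hj => ?_
    rcases isChild_or_isChild_of_adj hj with hrj | hjr
    · exact absurd (hrj.1.symm.trans P.parent_root) (Ne.symm hrj.2)
    · simp [childView, hjr]
  obtain ⟨f, hfr, -, hf⟩ := isGoodColor_of_childView hF hgood (hview ▸ hxc)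
  exact ⟨f, hfr, fun i => hf i (P.mem_subtree_root i)⟩

end RootedParentMap

end SimpleGraph

/-- Let `T` be a tree rooted at `r`, let `k ≥ 3`, and fix strategies `F_i`.
For every color `c` that is not dominant for `F_r` there is a demonic coloring `f` with
`f(r) = c`.  Consequently every tree with at least two vertices satisfies `μ(T) = 2`. -/
theorem tree_demonic_coloring_and_mu_eq_two {V : Type*} [Fintype V]
    (T : SimpleGraph V) (hT : T.IsTree) (r : V) :
    (∀ k : ℕ, 3 ≤ k →
      ∀ F : V → (V → Fin k) → Fin k,
        (∀ v : V, ∀ x y : V → Fin k, (∀ u : V, T.Adj v u → x u = y u) → F v x = F v y) →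
        ∀ c : Fin k, ¬ DominantColor (F r) c →
          ∃ f : V → Fin k, f r = c ∧ ∀ i : V, F i f ≠ f i) ∧
    (2 ≤ Fintype.card V → hatGuessingNumber T = 2) := by
  obtain ⟨P⟩ := hT.nonempty_rootedParentMap r
  refine ⟨fun k hk F hF c hc => P.exists_demonic_of_not_dominantColor hF hk hc, fun hcard => ?_⟩
  have : Nontrivial V := Fintype.one_lt_card_iff_nontrivial.1 hcard
  obtain ⟨v, hv⟩ := hT.connected.preconnected.exists_adj_of_nontrivial r
  refine IsGreatest.csSup_eq (s := {k | T.HasWinningStrategy k})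
    ⟨hv.hasWinningStrategy_two, fun k ⟨F, hF, hwin⟩ => ?_⟩
  by_contra! hk
  obtain ⟨c, hc⟩ := exists_not_dominantColor hk (F r)
  obtain ⟨f, -, hf⟩ := P.exists_demonic_of_not_dominantColor hF hk hc
  obtain ⟨i, hi⟩ := hwin f
  exact hf i hi
end

section
/- Let T be a tree rooted at r with color set Γ_k, and let s ≥ 1 with k > s(s+1). For any s-guessing strategy F_r at r (mapping colorings to s-element subsets of Γ_k), there are at most s s-dominant colors, where a color d is s-dominant if the set {x : d ∈ F_r(x)} contains a cube all of whose components have size at least k−s. -/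
/-!
If `s + 1` colors were `s`-dominant, pick a witnessing cube for each. In every coordinate the
`s + 1` cube components each miss at most `s` of the `k > s(s+1)` colors, so they share a color.
The coloring built from these common colors lies in all `s + 1` cubes, so the strategy guesses
all `s + 1` colors there, although it guesses at most `s`.
-/

/-- A color `d` is `s`-dominant for an `s`-guessing strategy `F` if the set
`{x : d ∈ F x}` contains a combinatorial cube all of whose components have size at
least `k−s`. -/
def SDominantColor {V : Type*} [Fintype V] {k : ℕ} (s : ℕ)
    (F : (V → Fin k) → Finset (Fin k)) (d : Fin k) : Prop :=
  ∃ C : V → Finset (Fin k), (∀ i : V, k - s ≤ (C i).card) ∧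
    ∀ x : V → Fin k, (∀ i : V, x i ∈ C i) → d ∈ F x

open Finset

theorem Finset.exists_forall_mem_of_card_mul_lt {ι α : Type*} [Fintype α] [DecidableEq α]
    {s : ℕ} (I : Finset ι) (A : ι → Finset α)
    (hA : ∀ i ∈ I, Fintype.card α - s ≤ #(A i)) (hI : #I * s < Fintype.card α) :
    ∃ a, ∀ i ∈ I, a ∈ A i := by
  by_contra! hmiss
  have hcover : (univ : Finset α) ⊆ I.biUnion fun i => (A i)ᶜ := fun a _ => by
    obtain ⟨i, hi, ha⟩ := hmiss a
    exact mem_biUnion.2 ⟨i, hi, mem_compl.2 ha⟩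
  have hcompl : ∀ i ∈ I, #(A i)ᶜ ≤ s := fun i hi => by
    rw [card_compl]
    have := hA i hi
    omega
  have : Fintype.card α ≤ #I * s :=
    calc Fintype.card α = #(univ : Finset α) := card_univ.symm
      _ ≤ #(I.biUnion fun i => (A i)ᶜ) := card_le_card hcover
      _ ≤ ∑ i ∈ I, #(A i)ᶜ := card_biUnion_le
      _ ≤ ∑ _i ∈ I, s := sum_le_sum hcompl
      _ = #I * s := by rw [sum_const, smul_eq_mul]
  omega

theorem Finset.exists_forall_mem_pi_of_card_mul_lt {ι V α : Type*} [Fintype α] [DecidableEq α]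
    {s : ℕ} (I : Finset ι) (C : ι → V → Finset α)
    (hC : ∀ i ∈ I, ∀ v, Fintype.card α - s ≤ #(C i v)) (hI : #I * s < Fintype.card α) :
    ∃ x : V → α, ∀ i ∈ I, ∀ v, x v ∈ C i v := by
  choose x hx using fun v => exists_forall_mem_of_card_mul_lt I (C · v) (fun i hi => hC i hi v) hI
  exact ⟨x, fun i hi v => hx v i hi⟩

theorem SDominantColor.exists_subset_guess {V : Type*} [Fintype V] {k s : ℕ}
    {F : (V → Fin k) → Finset (Fin k)} (D : Finset (Fin k))
    (hD : ∀ d ∈ D, SDominantColor s F d) (hDk : #D * s < k) :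
    ∃ x, D ⊆ F x := by
  choose! C hCcard hCmem using hD
  obtain ⟨x, hx⟩ := exists_forall_mem_pi_of_card_mul_lt D C
    (by simpa only [Fintype.card_fin] using hCcard) (by rwa [Fintype.card_fin])
  exact ⟨x, fun d hd => hCmem d hd x (hx d hd)⟩

theorem tree_at_most_s_dominant_colors_general {V : Type*} [Fintype V]
    (k s : ℕ)
    (hk : s * (s + 1) < k)
    (Fr : (V → Fin k) → Finset (Fin k))
    (hcard : ∀ x : V → Fin k, (Fr x).card ≤ s)
    (D : Finset (Fin k)) (hD : ∀ d ∈ D, SDominantColor s Fr d) :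
    D.card ≤ s := by
  by_contra! hlt
  obtain ⟨D', hD'D, hD'card⟩ := exists_subset_card_eq hlt
  obtain ⟨x, hD'x⟩ := SDominantColor.exists_subset_guess D' (fun d hd => hD d (hD'D hd))
    (by rw [hD'card, mul_comm]; exact hk)
  have := card_le_card hD'x
  have := hcard x
  omega

/-- Let `T` be a tree rooted at `r`, `s ≥ 1` and `k > s(s+1)`.  For any
`s`-guessing strategy `F_r` at `r` there are at most `s` `s`-dominant colors. -/
theorem tree_at_most_s_dominant_colors {V : Type*} [Fintype V]
    (T : SimpleGraph V) (hT : T.IsTree) (r : V) (k s : ℕ) (hs : 1 ≤ s)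
    (hk : s * (s + 1) < k)
    (Fr : (V → Fin k) → Finset (Fin k))
    (hcard : ∀ x : V → Fin k, (Fr x).card ≤ s)
    (hFr : ∀ x y : V → Fin k, (∀ u : V, T.Adj r u → x u = y u) → Fr x = Fr y)
    (D : Finset (Fin k)) (hD : ∀ d ∈ D, SDominantColor s Fr d) :
    D.card ≤ s :=
  tree_at_most_s_dominant_colors_general k s hk Fr hcard D hD
end

section
/- For every tree T and every s ≥ 1, the s-guess hat guessing number satisfies μ_s(T) ≤ s(s+1): if the number of colors k exceeds s(s+1), then for any family of s-guessing strategies on T there is a coloring for which no vertex's guess-set contains its own color. -/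
/-!
Induct on forests, removing a vertex `ℓ` with at most one neighbor `u`. On the remaining forest
let `u` guess the colors `c` that it would guess, in the original strategy, for every color of `ℓ`
that `ℓ` itself does not guess when `u` has color `c`. If more than `s` colors `c` qualified, take
`s + 1` of them: `ℓ`'s guesses for these `s + 1` colors of `u` cover at most `s (s + 1)` colors,
fewer than there are, so some color of `ℓ` avoids all of them and makes `u` guess all `s + 1`
colors at once. Hence the new strategy is again `s`-guessing, a coloring defeating it exists by
induction, and it extends to a coloring defeating the original strategy.
-/

open Finset Function

lemma Finset.exists_forall_notMem_of_card_mul_lt {ι α : Type*} [Fintype α] {Y : Finset ι}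
    {A : ι → Finset α} {s : ℕ} (hA : ∀ t ∈ Y, #(A t) ≤ s) (hY : #Y * s < Fintype.card α) :
    ∃ b, ∀ t ∈ Y, b ∉ A t := by
  classical
  obtain ⟨b, -, hb⟩ := exists_mem_notMem_of_card_lt_card (s := Y.biUnion A) (t := univ) <|
    calc #(Y.biUnion A) ≤ ∑ t ∈ Y, #(A t) := card_biUnion_le
      _ ≤ #Y * s := sum_le_card_nsmul _ _ _ hA
      _ < #univ := by rwa [card_univ]
  exact ⟨b, fun t ht hbt ↦ hb (mem_biUnion.2 ⟨t, ht, hbt⟩)⟩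

namespace SimpleGraph

variable {V α : Type*} {G : SimpleGraph V} {s : ℕ}

lemma IsAcyclic.exists_neighborSet_subsingleton [Finite V] [Nonempty V] (hG : G.IsAcyclic) :
    ∃ ℓ, (G.neighborSet ℓ).Subsingleton := by
  obtain ⟨u, v, p, hp, hmax⟩ := Walk.exists_isPath_forall_isPath_length_le_length G
  have eq_snd : ∀ w ∈ G.neighborSet u, w = p.snd := fun w hw ↦
    hG.eq_snd_of_adj_start hp hw <| by
      by_contra hw'
      simpa using hmax _ _ _ (hp.cons (h := G.adj_symm hw) hw')
  exact ⟨u, fun w hw w' hw' ↦ (eq_snd w hw).trans (eq_snd w' hw').symm⟩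

/-- `F v f` is the set of colors guessed by `v` under the coloring `f`. -/
structure IsGuessStrategy (G : SimpleGraph V) (s : ℕ) (F : V → (V → α) → Finset α) : Prop where
  card_le : ∀ v f, #(F v f) ≤ s
  eq_of_forall_adj : ∀ v f g, (∀ u, G.Adj v u → f u = g u) → F v f = F v g

/-- No `s`-guessing strategy on `G` wins with the colors `α`, i.e. `μ_s(G) < Fintype.card α`. -/
def HatLosing (G : SimpleGraph V) (s : ℕ) (α : Type*) : Prop :=
  ∀ F : V → (V → α) → Finset α, G.IsGuessStrategy s F → ∃ f : V → α, ∀ v, f v ∉ F v f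

section EraseLeaf

variable [DecidableEq V] {ℓ : V} {F : V → (V → α) → Finset α}

def extendAt (ℓ : V) (y : ({ℓ}ᶜ : Set V) → α) (b : α) : V → α := fun v ↦
  if h : v = ℓ then b else y ⟨v, h⟩

@[simp] lemma extendAt_self (y : ({ℓ}ᶜ : Set V) → α) (b : α) : extendAt ℓ y b ℓ = b :=
  dif_pos rfl

@[simp] lemma extendAt_of_ne (y : ({ℓ}ᶜ : Set V) → α) (b : α) {v : V} (hv : v ≠ ℓ) :
    extendAt ℓ y b v = y ⟨v, hv⟩ :=
  dif_neg hv

lemma IsGuessStrategy.apply_extendAt_congr (hF : G.IsGuessStrategy s F) {v : V}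
    {y y' : ({ℓ}ᶜ : Set V) → α} {b b' : α} (hy : ∀ u : ({ℓ}ᶜ : Set V), G.Adj v u → y u = y' u)
    (hb : G.Adj v ℓ → b = b') : F v (extendAt ℓ y b) = F v (extendAt ℓ y' b') := by
  refine hF.eq_of_forall_adj v _ _ fun u hu ↦ ?_
  by_cases h : u = ℓ
  · subst h
    simpa using hb hu
  · simpa [h] using hy ⟨u, h⟩ hu

lemma IsGuessStrategy.apply_self_extendAt_congr (hF : G.IsGuessStrategy s F)
    (y : ({ℓ}ᶜ : Set V) → α) (b b' : α) : F ℓ (extendAt ℓ y b) = F ℓ (extendAt ℓ y b') :=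
  hF.apply_extendAt_congr (fun _ _ ↦ rfl) fun h ↦ (G.loopless.irrefl ℓ h).elim

/-- The strategy on `G - ℓ` in which a neighbor `v` of `ℓ` guesses the colors `c` that it guesses
for every color of `ℓ` that `ℓ` does not guess when `v` has color `c`; the other vertices play
as before, with the dummy color `b₀` at `ℓ`. -/
noncomputable def eraseLeafStrategy [Fintype α] (G : SimpleGraph V) (F : V → (V → α) → Finset α)
    (ℓ : V) (b₀ : α) (v : ({ℓ}ᶜ : Set V)) (y : ({ℓ}ᶜ : Set V) → α) : Finset α :=
  open scoped Classical in
  if G.Adj ℓ v then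
    ({c | ∀ b, b ∉ F ℓ (extendAt ℓ (update y v c) b) → c ∈ F v (extendAt ℓ y b)} : Finset α)
  else F v (extendAt ℓ y b₀)

variable [Fintype α]

lemma IsGuessStrategy.card_eraseLeafStrategy_le (hF : G.IsGuessStrategy s F)
    (hα : s * (s + 1) < Fintype.card α) (b₀ : α) (v : ({ℓ}ᶜ : Set V))
    (y : ({ℓ}ᶜ : Set V) → α) : #(G.eraseLeafStrategy F ℓ b₀ v y) ≤ s := by
  classical
  unfold eraseLeafStrategy
  split_ifs with hv
  · by_contra! hlt
    obtain ⟨Y, hYsub, hYcard⟩ := exists_subset_card_eq (Nat.succ_le_of_lt hlt)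
    obtain ⟨b, hb⟩ := exists_forall_notMem_of_card_mul_lt
      (A := fun c ↦ F ℓ (extendAt ℓ (update y v c) b₀)) (fun _ _ ↦ hF.card_le _ _)
      (by rw [hYcard]; linarith)
    have hY : Y ⊆ F v (extendAt ℓ y b) := fun c hc ↦
      (mem_filter.1 (hYsub hc)).2 b (by rw [hF.apply_self_extendAt_congr _ b b₀]; exact hb c hc)
    have := card_le_card hY
    have := hF.card_le v (extendAt ℓ y b)
    omega
  · exact hF.card_le _ _

lemma IsGuessStrategy.eraseLeaf (hF : G.IsGuessStrategy s F)
    (hℓ : (G.neighborSet ℓ).Subsingleton) (hα : s * (s + 1) < Fintype.card α) (b₀ : α) :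
    (G.induce {ℓ}ᶜ).IsGuessStrategy s (G.eraseLeafStrategy F ℓ b₀) := by
  refine ⟨hF.card_eraseLeafStrategy_le hα b₀, fun v y y' hyy' ↦ ?_⟩
  have hy : ∀ u : ({ℓ}ᶜ : Set V), G.Adj v u → y u = y' u := fun u hu ↦ hyy' u (by simpa)
  unfold eraseLeafStrategy
  split_ifs with hv
  · have hℓc : ∀ c b, F ℓ (extendAt ℓ (update y v c) b) = F ℓ (extendAt ℓ (update y' v c) b) :=
      fun c b ↦ hF.apply_extendAt_congr (fun u hu ↦ by
        obtain rfl : u = v := Subtype.ext (hℓ hu hv)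
        simp) fun _ ↦ rfl
    have hvc : ∀ b, F v (extendAt ℓ y b) = F v (extendAt ℓ y' b) :=
      fun b ↦ hF.apply_extendAt_congr hy fun _ ↦ rfl
    ext c
    simp only [mem_filter, mem_univ, true_and, hℓc, hvc]
  · exact hF.apply_extendAt_congr hy fun _ ↦ rfl

lemma IsGuessStrategy.exists_extendAt_forall_notMem (hF : G.IsGuessStrategy s F)
    (hℓ : (G.neighborSet ℓ).Subsingleton) (hα : s < Fintype.card α) {b₀ : α}
    {y : ({ℓ}ᶜ : Set V) → α} (hy : ∀ v, y v ∉ G.eraseLeafStrategy F ℓ b₀ v y) :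
    ∃ b, ∀ w, extendAt ℓ y b w ∉ F w (extendAt ℓ y b) := by
  have h_not_adj : ∀ v : ({ℓ}ᶜ : Set V), ¬G.Adj ℓ v → y v ∉ F v (extendAt ℓ y b₀) :=
    fun v hv ↦ by simpa [eraseLeafStrategy, hv] using hy v
  obtain ⟨b, hbℓ, hb_adj⟩ : ∃ b, b ∉ F ℓ (extendAt ℓ y b) ∧
      ∀ v : ({ℓ}ᶜ : Set V), G.Adj ℓ v → y v ∉ F v (extendAt ℓ y b) := by
    by_cases h : ∃ v : ({ℓ}ᶜ : Set V), G.Adj ℓ v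
    · obtain ⟨x, hx⟩ := h
      have := hy x
      simp only [eraseLeafStrategy, hx, if_true, mem_filter, mem_univ, true_and,
        update_eq_self, not_forall, exists_prop] at this
      obtain ⟨b, hbℓ, hbx⟩ := this
      refine ⟨b, hbℓ, fun v hv ↦ ?_⟩
      obtain rfl : v = x := Subtype.ext (hℓ hv hx)
      exact hbx
    · push Not at h
      obtain ⟨b, -, hb⟩ := exists_mem_notMem_of_card_lt_card (s := F ℓ (extendAt ℓ y b₀))
        (t := univ) (by rw [card_univ]; exact (hF.card_le _ _).trans_lt hα)
      exact ⟨b, by rwa [hF.apply_self_extendAt_congr y b b₀], fun v hv ↦ (h v hv).elim⟩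
  refine ⟨b, fun w ↦ ?_⟩
  by_cases hw : w = ℓ
  · subst hw
    simpa using hbℓ
  by_cases hℓw : G.Adj ℓ w
  · simpa [hw] using hb_adj ⟨w, hw⟩ hℓw
  · rw [extendAt_of_ne _ _ hw, hF.apply_extendAt_congr (fun _ _ ↦ rfl) fun h ↦ (hℓw h.symm).elim]
    exact h_not_adj ⟨w, hw⟩ hℓw

end EraseLeaf

lemma HatLosing.of_induce_compl_singleton [Fintype α] {ℓ : V}
    (hℓ : (G.neighborSet ℓ).Subsingleton) (hα : s * (s + 1) < Fintype.card α)
    (h : (G.induce {ℓ}ᶜ).HatLosing s α) : G.HatLosing s α := fun F hF ↦ by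
  classical
  have : Nonempty α := Fintype.card_pos_iff.1 (by omega)
  obtain ⟨y, hy⟩ := h _ (hF.eraseLeaf hℓ hα (Classical.arbitrary α))
  obtain ⟨b, hb⟩ := hF.exists_extendAt_forall_notMem hℓ (by nlinarith) hy
  exact ⟨_, hb⟩

theorem IsAcyclic.hatLosing [Finite V] [Fintype α] (hG : G.IsAcyclic)
    (hα : s * (s + 1) < Fintype.card α) : G.HatLosing s α := by
  suffices ∀ n (W : Type _) [Finite W] (H : SimpleGraph W), Nat.card W = n → H.IsAcyclic →
      H.HatLosing s α from this _ V G rfl hG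
  intro n
  induction n with
  | zero =>
    intro W _ H hW _ F _
    have : IsEmpty W := Finite.card_eq_zero_iff.1 hW
    exact ⟨isEmptyElim, isEmptyElim⟩
  | succ n ih =>
    intro W _ H hW hH
    classical
    have : Nonempty W := Finite.card_pos_iff.1 (by omega)
    obtain ⟨ℓ, hℓ⟩ := hH.exists_neighborSet_subsingleton
    refine .of_induce_compl_singleton hℓ hα (ih _ _ ?_ (hH.induce _))
    have := Set.ncard_add_ncard_compl {ℓ}
    rw [Set.ncard_singleton] at this
    rw [Nat.card_coe_set_eq]
    omega

end SimpleGraph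

theorem tree_s_guess_bound_general {V : Type*} [Fintype V]
    (T : SimpleGraph V) (hT : T.IsTree) (s k : ℕ)
    (hk : s * (s + 1) < k)
    (F : V → (V → Fin k) → Finset (Fin k))
    (hcard : ∀ v : V, ∀ x : V → Fin k, (F v x).card ≤ s)
    (hF : ∀ v : V, ∀ x y : V → Fin k, (∀ u : V, T.Adj v u → x u = y u) → F v x = F v y) :
    ∃ f : V → Fin k, ∀ v : V, f v ∉ F v f :=
  hT.isAcyclic.hatLosing (by rwa [Fintype.card_fin]) F ⟨hcard, hF⟩

/-- For every tree `T` and every `s ≥ 1`, the `s`-guess hat guessing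
number satisfies `μ_s(T) ≤ s(s+1)`: if the number of colors `k` exceeds `s(s+1)`, then
for any family of `s`-guessing strategies on `T` there is a coloring for which no
vertex's guess-set contains its own color. -/
theorem tree_s_guess_bound {V : Type*} [Fintype V]
    (T : SimpleGraph V) (hT : T.IsTree) (s k : ℕ) (hs : 1 ≤ s)
    (hk : s * (s + 1) < k)
    (F : V → (V → Fin k) → Finset (Fin k))
    (hcard : ∀ v : V, ∀ x : V → Fin k, (F v x).card ≤ s)
    (hF : ∀ v : V, ∀ x y : V → Fin k, (∀ u : V, T.Adj v u → x u = y u) → F v x = F v y) :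
    ∃ f : V → Fin k, ∀ v : V, f v ∉ F v f :=
  tree_s_guess_bound_general T hT s k hk F hcard hF
end

section
/- If a graph G admits a vertex partition V = A ∪ B such that G[B] is a tree, A is an independent set, and every vertex of B has at most one neighbor in A, then μ_s(G) ≤ (s²+s)(s²+s+1); in particular μ(G) ≤ 6. -/
/-!
Root the tree `G[Aᶜ]`. For a vertex `v` and a colouring outside its subtree, call a colour of `v`
good if the subtree can be recoloured, with that colour at `v`, so that all of it guesses wrong.
With `t` guesses per vertex and more than `t (t + 1)` colours, at most `t` colours are bad at
each vertex, by induction from the leaves: given `t + 1` bad colours at `v`, every child has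
a colour that is good for all of them at once (it has at most `t (t + 1)` bad ones), and once
the children are coloured so, the guesses of `v` no longer depend on its own colour, so one of
the `t + 1` colours escapes them. At the root this yields a colouring on which everybody is wrong.

Vertices of the independent set `A` see only `Aᶜ`, so each can dodge its `s` guesses within
`s + 1` colours fixed in advance. A vertex of `Aᶜ` has at most one neighbour in `A`, so guessing
for each of these `s + 1` colours of that neighbour turns a winning strategy on `G` into one on
the tree with `s (s + 1)` guesses.
-/

/-- The `s`-guess hat guessing number `μ_s(G)`. -/
noncomputable def sHatGuessingNumber {V : Type*} [Fintype V] (G : SimpleGraph V)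
    (s : ℕ) : ℕ :=
  sSup {k : ℕ | ∃ F : V → (V → Fin k) → Finset (Fin k),
    (∀ v : V, ∀ x : V → Fin k, (F v x).card ≤ s) ∧
    (∀ v : V, ∀ x y : V → Fin k, (∀ u : V, G.Adj v u → x u = y u) → F v x = F v y) ∧
    (∀ x : V → Fin k, ∃ v : V, x v ∈ F v x)}

def HatGuessingWins {V : Type*} (G : SimpleGraph V) (s k : ℕ) : Prop :=
  ∃ F : V → (V → Fin k) → Finset (Fin k),
    (∀ v : V, ∀ x : V → Fin k, (F v x).card ≤ s) ∧
    (∀ v : V, ∀ x y : V → Fin k, (∀ u : V, G.Adj v u → x u = y u) → F v x = F v y) ∧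
    (∀ x : V → Fin k, ∃ v : V, x v ∈ F v x)

lemma sHatGuessingNumber_le {V : Type*} [Fintype V] {G : SimpleGraph V} {s m : ℕ}
    (h : ∀ k, HatGuessingWins G s k → k ≤ m) : sHatGuessingNumber G s ≤ m :=
  csSup_le' h

open Relation Finset

namespace HatGuessing

variable {W α : Type*} {parent : W → Option W} {u v c c' w : W}

lemma exists_forall_of_card_le {ι : Type*} [Fintype α] {P : ι → α → Prop} {I : Finset ι} {t : ℕ}
    (hP : ∀ i ∈ I, ∀ B : Finset α, (∀ b ∈ B, ¬ P i b) → B.card ≤ t)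
    (h : I.card * t < Fintype.card α) : ∃ b, ∀ i ∈ I, P i b := by
  classical
  by_contra! hall
  have hcover : (univ : Finset α) ⊆ I.biUnion fun i => univ.filter (¬ P i ·) := by
    intro b _
    obtain ⟨i, hi, hb⟩ := hall b
    exact mem_biUnion.mpr ⟨i, hi, mem_filter.mpr ⟨mem_univ b, hb⟩⟩
  have := (card_le_card hcover).trans
    (card_biUnion_le_card_mul _ _ t fun i hi => hP i hi _ fun b hb => (mem_filter.mp hb).2)
  rw [card_univ] at this
  omega

def subtree (parent : W → Option W) (v : W) : Set W :=
  {u | ReflTransGen (fun a b => parent a = some b) u v}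

lemma mem_subtree_self (parent : W → Option W) (v : W) : v ∈ subtree parent v :=
  ReflTransGen.refl

lemma mem_subtree_of_parent (h : parent u = some w) (hw : w ∈ subtree parent v) :
    u ∈ subtree parent v :=
  ReflTransGen.head h hw

lemma subtree_subset_of_parent (h : parent c = some v) : subtree parent c ⊆ subtree parent v :=
  fun _ hu => ReflTransGen.tail hu h

lemma notMem_subtree_of_parent (hwf : WellFounded fun a b => parent a = some b)
    (h : parent c = some v) : v ∉ subtree parent c :=
  fun hv => hwf.transGen.irrefl.irrefl v (TransGen.tail' hv h)

lemma exists_parent_eq_of_mem_subtree (hu : u ∈ subtree parent v) (hne : u ≠ v) :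
    ∃ c, parent c = some v ∧ u ∈ subtree parent c := by
  rcases ReflTransGen.cases_tail hu with rfl | ⟨c, huc, hcv⟩
  · exact absurd rfl hne
  · exact ⟨c, hcv, huc⟩

lemma eq_of_mem_subtree_of_parent (hwf : WellFounded fun a b => parent a = some b)
    (hc : parent c = some v) (hc' : parent c' = some v)
    (hu : u ∈ subtree parent c) (hu' : u ∈ subtree parent c') : c = c' := by
  have below : ∀ {a b}, parent a = some v → parent b = some v →
      a ∈ subtree parent b → a = b := by
    intro a b ha hb hab
    rcases ReflTransGen.cases_head hab with rfl | ⟨z, haz, hzb⟩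
    · rfl
    · rw [ha, Option.some.injEq] at haz
      exact absurd (haz ▸ hzb) (notMem_subtree_of_parent hwf hb)
  have hdet : Relator.RightUnique fun a b => parent a = some b :=
    fun _ _ _ hb hc => Option.some.inj (hb.symm.trans hc)
  rcases ReflTransGen.total_of_right_unique hdet hu hu' with h | h
  · exact below hc hc' h
  · exact (below hc' hc h).symm

lemma mem_subtree_or_eq_of_adj (hc : parent c = some v) (hu : u ∈ subtree parent c)
    (hw : parent u = some w ∨ parent w = some u) : w ∈ subtree parent c ∨ w = v := by
  rcases hw with hw | hw
  · rcases ReflTransGen.cases_head hu with rfl | ⟨z, huz, hzc⟩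
    · exact Or.inr (Option.some.inj (hw.symm.trans hc))
    · rw [hw, Option.some.injEq] at huz
      exact Or.inl (huz ▸ hzc)
  · exact Or.inl (mem_subtree_of_parent hw hu)

variable {F : W → (W → α) → Finset α}

/-- `q` is good at `v` for `x₀` if `x₀` can be recoloured inside the subtree of `v`, with colour
`q` at `v`, so that every vertex of that subtree guesses wrong. -/
def IsGoodColor (parent : W → Option W) (F : W → (W → α) → Finset α) (v : W) (x₀ : W → α)
    (q : α) : Prop :=
  ∃ x : W → α, x v = q ∧ (∀ u ∉ subtree parent v, x u = x₀ u) ∧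
    ∀ u ∈ subtree parent v, x u ∉ F u x

open Classical in
noncomputable def graft (parent : W → Option W) (v : W) (x : W → α) (z : W → W → α) :
    W → α := fun u =>
  if h : ∃ c, parent c = some v ∧ u ∈ subtree parent c then z h.choose u else x u

variable {x x' : W → α} {z z' : W → W → α}

lemma graft_of_mem (hwf : WellFounded fun a b => parent a = some b)
    (hc : parent c = some v) (hu : u ∈ subtree parent c) : graft parent v x z u = z c u := by
  have h : ∃ c, parent c = some v ∧ u ∈ subtree parent c := ⟨c, hc, hu⟩
  rw [graft, dif_pos h, eq_of_mem_subtree_of_parent hwf h.choose_spec.1 hc h.choose_spec.2 hu]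

lemma graft_of_notMem (hwf : WellFounded fun a b => parent a = some b)
    (hu : u ∉ subtree parent v ∨ u = v) : graft parent v x z u = x u := by
  refine dif_neg ?_
  rintro ⟨c, hc, huc⟩
  rcases hu with hu | rfl
  · exact hu (subtree_subset_of_parent hc huc)
  · exact notMem_subtree_of_parent hwf hc huc

variable (hwf : WellFounded fun a b => parent a = some b)
  (hloc : ∀ w (x y : W → α), (∀ u, parent w = some u ∨ parent u = some w → x u = y u) →
    F w x = F w y)
include hwf hloc

lemma graft_notMem_of_mem_subtree
    (hz : ∀ c, parent c = some v → (∀ u ∉ subtree parent c, z c u = x u) ∧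
      ∀ u ∈ subtree parent c, z c u ∉ F u (z c))
    (hc : parent c = some v) (hu : u ∈ subtree parent c) :
    graft parent v x z u ∉ F u (graft parent v x z) := by
  have agree : ∀ w, w ∈ subtree parent c ∨ w = v → graft parent v x z w = z c w := by
    rintro w (hw | rfl)
    · exact graft_of_mem hwf hc hw
    · rw [graft_of_notMem hwf (Or.inr rfl), (hz c hc).1 w (notMem_subtree_of_parent hwf hc)]
  rw [agree u (Or.inl hu),
    hloc u _ (z c) fun w hw => agree w (mem_subtree_or_eq_of_adj hc hu hw)]
  exact (hz c hc).2 u hu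

lemma isGoodColor_graft [DecidableEq W] {x₀ : W → α} {q : α}
    (hz : ∀ c, parent c = some v → (∀ u ∉ subtree parent c, z c u = Function.update x₀ v q u) ∧
      ∀ u ∈ subtree parent c, z c u ∉ F u (z c))
    (hq : q ∉ F v (graft parent v (Function.update x₀ v q) z)) : IsGoodColor parent F v x₀ q := by
  refine ⟨graft parent v (Function.update x₀ v q) z, ?_, fun u hu => ?_, fun u hu => ?_⟩
  · rw [graft_of_notMem hwf (Or.inr rfl), Function.update_self]
  · rw [graft_of_notMem hwf (Or.inl hu), Function.update_of_ne]
    rintro rfl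
    exact hu (mem_subtree_self parent u)
  · by_cases huv : u = v
    · subst huv
      rwa [graft_of_notMem hwf (Or.inr rfl), Function.update_self]
    · obtain ⟨c, hc, huc⟩ := exists_parent_eq_of_mem_subtree hu huv
      exact graft_notMem_of_mem_subtree hwf hloc hz hc huc

lemma guess_graft_eq (hx : ∀ u ∉ subtree parent v, x u = x' u)
    (hz : ∀ c, parent c = some v → z c c = z' c c) :
    F v (graft parent v x z) = F v (graft parent v x' z') := by
  refine hloc v _ _ fun u hu => ?_
  rcases hu with hu | hu
  · have hu' : u ∉ subtree parent v := notMem_subtree_of_parent hwf hu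
    rw [graft_of_notMem hwf (Or.inl hu'), graft_of_notMem hwf (Or.inl hu'), hx u hu']
  · rw [graft_of_mem hwf hu (mem_subtree_self parent u),
      graft_of_mem hwf hu (mem_subtree_self parent u), hz u hu]

variable [Fintype α] [DecidableEq W] {t : ℕ} (hk : t * (t + 1) < Fintype.card α)
  (hcard : ∀ w x, (F w x).card ≤ t)
include hk hcard

lemma card_le_of_forall_not_isGoodColor_of_children
    (ih : ∀ c, parent c = some v → ∀ (x₀ : W → α) (B : Finset α),
      (∀ q ∈ B, ¬ IsGoodColor parent F c x₀ q) → B.card ≤ t)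
    (x₀ : W → α) (B : Finset α) (hB : ∀ q ∈ B, ¬ IsGoodColor parent F v x₀ q) :
    B.card ≤ t := by
  by_contra! hBt
  obtain ⟨B₀, hB₀B, hB₀⟩ := exists_subset_card_eq (Nat.succ_le_of_lt hBt)
  have : Nonempty α := Fintype.card_pos_iff.mp (by omega)
  have hchild : ∀ c, ∃ b, parent c = some v →
      ∀ q ∈ B₀, IsGoodColor parent F c (Function.update x₀ v q) b := by
    intro c
    by_cases hc : parent c = some v
    · obtain ⟨b, hb⟩ := exists_forall_of_card_le (fun q _ => ih c hc _) (by rw [hB₀]; linarith)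
      exact ⟨b, fun _ => hb⟩
    · exact ⟨Classical.arbitrary α, fun h => absurd h hc⟩
  choose b hb using hchild
  have hwit : ∀ c q, ∃ y : W → α, parent c = some v → q ∈ B₀ → y c = b c ∧
      (∀ u ∉ subtree parent c, y u = Function.update x₀ v q u) ∧
      ∀ u ∈ subtree parent c, y u ∉ F u y := by
    intro c q
    by_cases h : parent c = some v ∧ q ∈ B₀
    · exact (hb c h.1 q h.2).imp fun y hy _ _ => hy
    · exact ⟨x₀, fun hc hq => absurd ⟨hc, hq⟩ h⟩
  choose z hz using hwit
  obtain ⟨q₀, hq₀⟩ := card_pos.mp (by omega : 0 < B₀.card)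
  obtain ⟨q, hq, hqF⟩ := exists_mem_notMem_of_card_lt_card (t := B₀)
    ((hcard v (graft parent v (Function.update x₀ v q₀) (z · q₀))).trans_lt (by omega))
  refine hB q (hB₀B hq) (isGoodColor_graft hwf hloc (fun c hc => (hz c q hc hq).2) ?_)
  rwa [guess_graft_eq hwf hloc (fun u hu => ?_) fun c hc => ?_]
  · rw [Function.update_of_ne, Function.update_of_ne] <;>
      (rintro rfl; exact hu (mem_subtree_self parent u))
  · rw [(hz c q hc hq).1, (hz c q₀ hc hq₀).1]

lemma card_le_of_forall_not_isGoodColor (v : W) :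
    ∀ (x₀ : W → α) (B : Finset α), (∀ q ∈ B, ¬ IsGoodColor parent F v x₀ q) → B.card ≤ t :=
  hwf.induction v fun _ ih => card_le_of_forall_not_isGoodColor_of_children hwf hloc hk hcard ih

theorem exists_forall_notMem_of_root {r : W} (hroot : ∀ u, u ∈ subtree parent r) :
    ∃ x : W → α, ∀ w, x w ∉ F w x := by
  classical
  have : Nonempty α := Fintype.card_pos_iff.mp (by omega)
  let x₀ : W → α := fun _ => Classical.arbitrary α
  obtain ⟨q, -, hq⟩ := exists_mem_notMem_of_card_lt_card (t := univ)
    (s := univ.filter (¬ IsGoodColor parent F r x₀ ·)) <| by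
      rw [card_univ]
      exact (card_le_of_forall_not_isGoodColor hwf hloc hk hcard r x₀ _
        fun q hq => (mem_filter.mp hq).2).trans_lt (by nlinarith)
  obtain ⟨x, -, -, hx⟩ : IsGoodColor parent F r x₀ q := by simpa using hq
  exact ⟨x, fun w => hx w (hroot w)⟩

end HatGuessing

namespace SimpleGraph

variable {W α : Type*} {T : SimpleGraph W}

lemma Connected.exists_adj_dist_add_one (hT : T.Connected) (r : W) {v : W} (hv : v ≠ r) :
    ∃ u, T.Adj u v ∧ T.dist r u + 1 = T.dist r v := by
  obtain ⟨p, -, hp⟩ := hT.exists_path_of_dist r v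
  have hnil : ¬ p.Nil := by
    rw [← Walk.length_eq_zero_iff, hp]
    exact (hT.dist_eq_zero_iff).not.mpr (Ne.symm hv)
  have hle := dist_le p.dropLast
  have hlen := Walk.length_dropLast_add_one hnil
  have hadj := p.adj_penultimate hnil
  have := (hT r p.penultimate).dist_triangle_left
  refine ⟨p.penultimate, hadj, ?_⟩
  rcases hadj.diff_dist_adj (u := r) with h | h | h <;> omega

lemma IsTree.eq_of_adj_of_dist_add_one (hT : T.IsTree) {r u u' v : W}
    (hu : T.Adj u v) (hu' : T.Adj u' v)
    (hd : T.dist r u + 1 = T.dist r v) (hd' : T.dist r u' + 1 = T.dist r v) : u = u' := by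
  classical
  obtain ⟨p, hp, -⟩ := hT.connected.exists_path_of_dist r v
  have mem_support : ∀ {w}, T.Adj w v → T.dist r w + 1 = T.dist r v → w ∈ p.support := by
    intro w hw hdw
    obtain ⟨q, hq, hql⟩ := hT.connected.exists_path_of_dist r w
    refine hT.isAcyclic.mem_support_of_ne_mem_support_of_adj_of_isPath hp hq hw.symm
      fun hvq => ?_
    have := dist_le (q.takeUntil v hvq)
    have := q.length_takeUntil_le_length hvq
    omega
  rw [hT.isAcyclic.eq_penultimate_of_adj_end hp hu.symm (mem_support hu hd),
    hT.isAcyclic.eq_penultimate_of_adj_end hp hu'.symm (mem_support hu' hd')]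

open HatGuessing in
lemma IsTree.exists_root [Finite W] (hT : T.IsTree) :
    ∃ (r : W) (parent : W → Option W), WellFounded (fun a b => parent a = some b) ∧
      (∀ u, u ∈ subtree parent r) ∧ ∀ u v, T.Adj u v → parent u = some v ∨ parent v = some u := by
  classical
  obtain ⟨r⟩ := hT.connected.nonempty
  choose! p hp using fun v (hv : v ≠ r) => hT.connected.exists_adj_dist_add_one r hv
  let parent : W → Option W := fun v => if v = r then none else some (p v)
  have hparent : ∀ {a b}, parent a = some b ↔ a ≠ r ∧ p a = b := by
    intro a b
    by_cases ha : a = r <;> simp [parent, ha]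
  have hdist : ∀ {a b}, parent a = some b → T.dist r b < T.dist r a := by
    intro a b hab
    obtain ⟨ha, rfl⟩ := hparent.mp hab
    have := (hp a ha).2
    omega
  refine ⟨r, parent, ?_, fun u => ?_, fun u v huv => ?_⟩
  · exact Subrelation.wf hdist (@Finite.wellFounded_of_trans_of_irrefl W _ _
      ⟨fun _ _ _ h₁ h₂ => h₂.trans h₁⟩ ⟨fun _ => lt_irrefl _⟩)
  · induction hn : T.dist r u using Nat.strong_induction_on generalizing u with
    | _ n ih =>
      by_cases hu : u = r
      · exact hu ▸ mem_subtree_self parent r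
      · have hpu : parent u = some (p u) := hparent.mpr ⟨hu, rfl⟩
        exact mem_subtree_of_parent hpu (ih _ (hn ▸ hdist hpu) _ rfl)
  · have hne : ∀ {a b}, T.Adj a b → T.dist r a = T.dist r b + 1 → parent a = some b := by
      intro a b hab hd
      have ha : a ≠ r := by rintro rfl; simp at hd
      exact hparent.mpr ⟨ha, hT.eq_of_adj_of_dist_add_one (hp a ha).1 hab.symm (hp a ha).2 hd.symm⟩
    rcases hT.dist_eq_dist_add_one_of_adj r huv with h | h
    · exact Or.inl (hne huv h)
    · exact Or.inr (hne huv.symm h)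

theorem IsTree.exists_forall_notMem [Finite W] [Fintype α] (hT : T.IsTree) {t : ℕ}
    (hk : t * (t + 1) < Fintype.card α) (F : W → (W → α) → Finset α)
    (hcard : ∀ w x, (F w x).card ≤ t)
    (hloc : ∀ w (x y : W → α), (∀ u, T.Adj w u → x u = y u) → F w x = F w y) :
    ∃ x : W → α, ∀ w, x w ∉ F w x := by
  classical
  obtain ⟨r, parent, hwf, hroot, hadj⟩ := hT.exists_root
  exact HatGuessing.exists_forall_notMem_of_root hwf
    (fun w x y h => hloc w x y fun u hu => h u (hadj w u hu)) hk hcard hroot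

lemma IsTree.not_hatGuessingWins [Finite W] (hT : T.IsTree) {t k : ℕ} (hk : t * (t + 1) < k) :
    ¬ HatGuessingWins T t k := by
  rintro ⟨F, hcard, hloc, hwin⟩
  obtain ⟨x, hx⟩ := hT.exists_forall_notMem (by simpa using hk) F hcard hloc
  obtain ⟨v, hv⟩ := hwin x
  exact hx v hv

end SimpleGraph

lemma exists_castLE_notMem {s k : ℕ} (hsk : s < k) {S : Finset (Fin k)} (hS : S.card ≤ s) :
    ∃ c : Fin (s + 1), Fin.castLE hsk c ∉ S := by
  obtain ⟨_, hc, hcS⟩ := Finset.exists_mem_notMem_of_card_lt_card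
    (t := Finset.univ.map (Fin.castLEEmb hsk)) (by simpa using hS.trans_lt s.lt_succ_self)
  obtain ⟨c, -, rfl⟩ := Finset.mem_map.mp hc
  exact ⟨c, hcS⟩

theorem HatGuessingWins.induce_compl {V : Type*} {G : SimpleGraph V} {A : Set V} {s k : ℕ}
    (h : HatGuessingWins G s k) (hA : G.IsIndepSet A)
    (hone : ∀ v ∉ A, {a | a ∈ A ∧ G.Adj v a}.Subsingleton) (hsk : s < k) :
    HatGuessingWins (G.induce Aᶜ) (s * (s + 1)) k := by
  classical
  obtain ⟨F, hcard, hloc, hwin⟩ := h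
  let C : Fin (s + 1) → Fin k := Fin.castLE hsk
  let ext (y : ↥Aᶜ → Fin k) (g : V → Fin k) : V → Fin k := Subtype.val.extend y g
  have ext_of_notMem : ∀ {y g u} (hu : u ∉ A), ext y g u = y ⟨u, hu⟩ :=
    fun hu => Function.extend_val_apply (p := (· ∈ Aᶜ)) hu
  have ext_of_mem : ∀ {y g u}, u ∈ A → ext y g u = g u :=
    fun hu => Function.extend_val_apply' (not_not.mpr hu)
  refine ⟨fun b y => Finset.univ.biUnion fun c => F b (ext y fun _ => C c), fun b y => ?_,
    fun b y y' hy => ?_, fun y => ?_⟩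
  · exact (Finset.card_biUnion_le_card_mul _ _ s fun c _ => hcard _ _).trans (by simp [mul_comm])
  · refine Finset.biUnion_congr rfl fun c _ => hloc _ _ _ fun u hu => ?_
    by_cases huA : u ∈ A
    · rw [ext_of_mem huA, ext_of_mem huA]
    · rw [ext_of_notMem huA, ext_of_notMem huA]
      exact hy ⟨u, huA⟩ hu
  · choose d hd using fun u => exists_castLE_notMem hsk (hcard u (ext y fun _ => C 0))
    obtain ⟨v, hv⟩ := hwin (ext y fun u => C (d u))
    by_cases hvA : v ∈ A
    · refine absurd ?_ (hd v)
      rwa [ext_of_mem hvA, hloc v _ (ext y fun _ => C 0) fun u hu => ?_] at hv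
      have huA : u ∉ A := fun huA => hA hvA huA (G.ne_of_adj hu) hu
      rw [ext_of_notMem huA, ext_of_notMem huA]
    · obtain ⟨c, hc⟩ : ∃ c, ∀ a ∈ A, G.Adj v a → d a = c := by
        by_cases hN : ∃ a ∈ A, G.Adj v a
        · obtain ⟨a, ha, hva⟩ := hN
          exact ⟨d a, fun a' ha' hva' => congrArg d (hone v hvA ⟨ha', hva'⟩ ⟨ha, hva⟩)⟩
        · exact ⟨0, fun a ha hva => absurd ⟨a, ha, hva⟩ hN⟩
      refine ⟨⟨v, hvA⟩, Finset.mem_biUnion.mpr ⟨c, Finset.mem_univ c, ?_⟩⟩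
      rwa [ext_of_notMem hvA, hloc v _ (ext y fun _ => C c) fun u hu => ?_] at hv
      by_cases huA : u ∈ A
      · rw [ext_of_mem huA, ext_of_mem huA, hc u huA hu]
      · rw [ext_of_notMem huA, ext_of_notMem huA]

/-- If `G` admits a vertex partition `V = A ∪ B` (here `B = Aᶜ`) such
that `G[B]` is a tree, `A` is independent, and every vertex of `B` has at most one
neighbor in `A`, then `μ_s(G) ≤ (s²+s)(s²+s+1)` for all `s ≥ 1`; in particular
`μ(G) ≤ 6`. -/
theorem s_hat_guessing_tree_plus_independent {V : Type*} [Fintype V] [DecidableEq V]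
    (G : SimpleGraph V) (A : Finset V)
    (htree : (G.induce (↑(Aᶜ) : Set V)).IsTree)
    (hind : ∀ u ∈ A, ∀ w ∈ A, ¬ G.Adj u w)
    (hone : ∀ v ∈ Aᶜ, Set.ncard {u : V | u ∈ A ∧ G.Adj v u} ≤ 1) :
    (∀ s : ℕ, 1 ≤ s →
      sHatGuessingNumber G s ≤ (s ^ 2 + s) * (s ^ 2 + s + 1)) ∧
    sHatGuessingNumber G 1 ≤ 6 := by
  have hbound : ∀ s, sHatGuessingNumber G s ≤ (s ^ 2 + s) * (s ^ 2 + s + 1) := by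
    refine fun s => sHatGuessingNumber_le fun k hwin => ?_
    by_contra! hk
    have htree' : (G.induce (↑A : Set V)ᶜ).IsTree := by rwa [← Finset.coe_compl]
    refine htree'.not_hatGuessingWins (t := s * (s + 1)) (by nlinarith) <|
      hwin.induce_compl (fun u hu w hw _ => hind u hu w hw) (fun v hv => ?_) (by nlinarith)
    exact Set.ncard_le_one_iff_subsingleton.mp (hone v (by simpa using hv))
  exact ⟨fun s _ => hbound s, hbound 1⟩
end

section
/- For every graph G, the full subdivision S of G (obtained by subdividing every edge exactly once) satisfies μ_s(S) ≤ s(s+1)² for all s ≥ 1; in particular μ(S) ≤ 4. -/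
/-- The full subdivision of `G`: vertex set `V(G) ⊕ E(G)`, an original vertex `v` being
adjacent to an edge-vertex `e` iff `v` is an endpoint of `e`. -/
def fullSubdivision {V : Type*} (G : SimpleGraph V) :
    SimpleGraph (V ⊕ G.edgeSet) :=
  SimpleGraph.fromRel (fun x y =>
    match x, y with
    | Sum.inl v, Sum.inr e => v ∈ (e : Sym2 V)
    | _, _ => False)

/-!
Colour the vertices of one side `A` of a bipartite graph from a palette of `s + 1` colours. A vertex
`b` of the other side with at most `d` neighbours, all in `A`, guesses at most `s` colours for each
of the at most `(s + 1) ^ d` palette colourings of its neighbourhood; with more than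
`s * (s + 1) ^ d` colours, `b` can be given a colour outside all of these guesses. Once the side
`B` is coloured, each `a ∈ A` sees only `B`, so its guesses form a fixed set of at most `s`
colours, and some palette colour avoids it. In the resulting colouring every vertex guesses wrong.
The full subdivision is such a graph with `d = 2`.
-/

open Finset Sum

theorem sHatGuessingNumber_le_of_forall_exists_miss {W : Type*} [Fintype W]
    (H : SimpleGraph W) (s m : ℕ)
    (h : ∀ k, m < k → ∀ F : W → (W → Fin k) → Finset (Fin k),
      (∀ v x, #(F v x) ≤ s) → (∀ v x y, (∀ u, H.Adj v u → x u = y u) → F v x = F v y) →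
      ∃ x : W → Fin k, ∀ v, x v ∉ F v x) :
    sHatGuessingNumber H s ≤ m := by
  refine csSup_le' fun k ⟨F, hcard, hloc, hwin⟩ => ?_
  by_contra! hk
  obtain ⟨x, hx⟩ := h k hk F hcard hloc
  obtain ⟨v, hv⟩ := hwin x
  exact hx v hv

theorem Fin.exists_castLE_notMem {s k : ℕ} (h : s + 1 ≤ k) {t : Finset (Fin k)}
    (ht : #t ≤ s) : ∃ a : Fin (s + 1), Fin.castLE h a ∉ t := by
  obtain ⟨c, hc, hct⟩ := exists_mem_notMem_of_card_lt_card (s := t)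
    (t := univ.map (Fin.castLEEmb h)) (by simpa using Nat.lt_succ_of_le ht)
  obtain ⟨a, -, rfl⟩ := mem_map.1 hc
  exact ⟨a, hct⟩

namespace SimpleGraph

section Bipartite

variable {α β : Type*} {H : SimpleGraph (α ⊕ β)} {N : β → Finset α} {s d k : ℕ}
  {F : α ⊕ β → (α ⊕ β → Fin k) → Finset (Fin k)}

theorem exists_color_notMem_guess_of_palette (hB : ∀ b b', ¬ H.Adj (inr b) (inr b'))
    (hN : ∀ b a, H.Adj (inr b) (inl a) → a ∈ N b) (hNcard : ∀ b, #(N b) ≤ d)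
    (hcard : ∀ v x, #(F v x) ≤ s)
    (hloc : ∀ v x y, (∀ u, H.Adj v u → x u = y u) → F v x = F v y)
    (hk : s * (s + 1) ^ d < k) (h : s + 1 ≤ k) (b : β) :
    ∃ c : Fin k, ∀ (g : α → Fin (s + 1)) (x : α ⊕ β → Fin k),
      (∀ a ∈ N b, x (inl a) = Fin.castLE h (g a)) → c ∉ F (inr b) x := by
  classical
  let extend (p : N b → Fin (s + 1)) : α ⊕ β → Fin k :=
    Sum.elim (fun a => Fin.castLE h (if ha : a ∈ N b then p ⟨a, ha⟩ else 0))
      (fun _ => Fin.castLE h 0)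
  let guesses := univ.biUnion fun p => F (inr b) (extend p)
  have hguesses : #guesses < k := calc
    #guesses ≤ ∑ p, #(F (inr b) (extend p)) := card_biUnion_le
    _ ≤ ∑ _p : N b → Fin (s + 1), s := sum_le_sum fun p _ => hcard (inr b) (extend p)
    _ = (s + 1) ^ #(N b) * s := by simp
    _ ≤ s * (s + 1) ^ d := by
      rw [mul_comm]
      exact Nat.mul_le_mul_left s (Nat.pow_le_pow_right s.succ_pos (hNcard b))
    _ < k := hk
  obtain ⟨c, -, hc⟩ := exists_mem_notMem_of_card_lt_card (s := guesses)
    (t := univ) (by simpa using hguesses)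
  refine ⟨c, fun g x hx hcx => hc (mem_biUnion.2 ⟨fun a : N b => g a, mem_univ _, ?_⟩)⟩
  rwa [hloc (inr b) x (extend fun a : N b => g a) ?_] at hcx
  rintro (a | b') hadj
  · simp [extend, hN b a hadj, hx a (hN b a hadj)]
  · exact absurd hadj (hB b b')

theorem exists_forall_notMem_guess_of_bipartite (hA : ∀ a a', ¬ H.Adj (inl a) (inl a'))
    (hB : ∀ b b', ¬ H.Adj (inr b) (inr b'))
    (hN : ∀ b a, H.Adj (inr b) (inl a) → a ∈ N b) (hNcard : ∀ b, #(N b) ≤ d)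
    (hcard : ∀ v x, #(F v x) ≤ s)
    (hloc : ∀ v x y, (∀ u, H.Adj v u → x u = y u) → F v x = F v y)
    (hk : s * (s + 1) ^ d < k) :
    ∃ x : α ⊕ β → Fin k, ∀ v, x v ∉ F v x := by
  have h : s + 1 ≤ k := by
    have : s ≤ s * (s + 1) ^ d := Nat.le_mul_of_pos_right s (by positivity)
    omega
  choose c hc using exists_color_notMem_guess_of_palette hB hN hNcard hcard hloc hk h
  have hlocA (a : α) (x : α ⊕ β → Fin k) (hx : ∀ b, x (inr b) = c b) :
      F (inl a) x = F (inl a) (Sum.elim (fun _ => Fin.castLE h 0) c) := by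
    refine hloc (inl a) _ _ ?_
    rintro (a' | b) hadj
    · exact absurd hadj (hA a a')
    · exact hx b
  choose g hg using fun a => Fin.exists_castLE_notMem h
    (hcard (inl a) (Sum.elim (fun _ => Fin.castLE h 0) c))
  refine ⟨Sum.elim (fun a => Fin.castLE h (g a)) c, ?_⟩
  rintro (a | b)
  · rw [hlocA a _ fun _ => rfl]
    exact hg a
  · exact hc b g _ fun _ _ => rfl

theorem sHatGuessingNumber_le_of_bipartite [Fintype (α ⊕ β)]
    (hA : ∀ a a', ¬ H.Adj (inl a) (inl a')) (hB : ∀ b b', ¬ H.Adj (inr b) (inr b'))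
    (hN : ∀ b a, H.Adj (inr b) (inl a) → a ∈ N b) (hNcard : ∀ b, #(N b) ≤ d) (s : ℕ) :
    sHatGuessingNumber H s ≤ s * (s + 1) ^ d :=
  sHatGuessingNumber_le_of_forall_exists_miss H s _ fun _ hk _ hcard hloc =>
    exists_forall_notMem_guess_of_bipartite hA hB hN hNcard hcard hloc hk

end Bipartite

variable {V : Type*} (G : SimpleGraph V)

@[simp]
theorem fullSubdivision_adj_inl_inl (v w : V) : ¬ (fullSubdivision G).Adj (inl v) (inl w) := by
  simp [fullSubdivision]

@[simp]
theorem fullSubdivision_adj_inr_inr (e f : G.edgeSet) :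
    ¬ (fullSubdivision G).Adj (inr e) (inr f) := by
  simp [fullSubdivision]

@[simp]
theorem fullSubdivision_adj_inr_inl (e : G.edgeSet) (v : V) :
    (fullSubdivision G).Adj (inr e) (inl v) ↔ v ∈ (e : Sym2 V) := by
  simp [fullSubdivision]

theorem sHatGuessingNumber_fullSubdivision_le [DecidableEq V]
    [Fintype (V ⊕ G.edgeSet)] (s : ℕ) :
    sHatGuessingNumber (fullSubdivision G) s ≤ s * (s + 1) ^ 2 :=
  sHatGuessingNumber_le_of_bipartite (N := fun e : G.edgeSet => (e : Sym2 V).toFinset)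
    (fullSubdivision_adj_inl_inl G) (fullSubdivision_adj_inr_inr G)
    (fun e v hadj => by simpa using hadj)
    (fun e => by rw [Sym2.card_toFinset]; split_ifs <;> omega) s

end SimpleGraph

/-- For every graph `G`, the full subdivision `S` of `G` satisfies
`μ_s(S) ≤ s(s+1)²` for all `s ≥ 1`; in particular `μ(S) ≤ 4`. -/
theorem s_hat_guessing_full_subdivision {V : Type*} [Fintype V] [DecidableEq V]
    (G : SimpleGraph V) [DecidableRel G.Adj] :
    (∀ s : ℕ, 1 ≤ s → sHatGuessingNumber (fullSubdivision G) s ≤ s * (s + 1) ^ 2) ∧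
    sHatGuessingNumber (fullSubdivision G) 1 ≤ 4 :=
  ⟨fun s _ => G.sHatGuessingNumber_fullSubdivision_le s,
    G.sHatGuessingNumber_fullSubdivision_le 1⟩
end

section
/- For every tree T, the color-sequence (2, 3, 3, ..., 3) is losing: if one fixed vertex has 2 available colors and every other vertex has 3 available colors, then for every strategy family on T there exists a coloring for which every vertex guesses wrong. -/
/-!
Grow the tree from `r` one vertex at a time, always adding a vertex `ℓ` farthest from `r`, so
that `ℓ` has a single neighbour `p` among the vertices already present. Since `ℓ` sees only `p`,
its guess is a function of the colour `c` of `p`, and `ℓ` can still take either of its two other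
colours. Call `c` bad if both of these make `p` guess `c`. With three colours for `ℓ`, the
remaining colour sets of two bad colours would intersect, so at most one colour of `p` is bad.
Letting `p` guess that bad colour turns any strategy on the larger vertex set into one on the
smaller, and a losing colouring for the latter extends to one for the former. At the root,
which sees nobody, two colours suffice.
-/

open Finset Function

namespace SimpleGraph

variable {V : Type*} {G : SimpleGraph V}

lemma Connected.exists_adj_dist_add_one_eq (hG : G.Connected) {u v : V} (huv : u ≠ v) :
    ∃ w, G.Adj v w ∧ G.dist u w + 1 = G.dist u v := by
  obtain ⟨p, hp⟩ := hG.exists_walk_length_eq_dist v u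
  cases p with
  | nil => exact absurd rfl huv
  | @cons _ w _ hadj q =>
    refine ⟨w, hadj, ?_⟩
    have hq : G.dist w u ≤ q.length := dist_le q
    have htri : G.dist v u ≤ G.dist v w + G.dist w u := hG.dist_triangle
    rw [Walk.length_cons] at hp
    rw [dist_eq_one_iff_adj.mpr hadj] at htri
    rw [dist_comm, dist_comm (u := u)]
    omega

lemma IsTree.eq_of_adj_of_dist_add_one_eq (hG : G.IsTree) {u v w₁ w₂ : V}
    (h₁ : G.Adj v w₁) (h₂ : G.Adj v w₂)
    (hd₁ : G.dist u w₁ + 1 = G.dist u v) (hd₂ : G.dist u w₂ + 1 = G.dist u v) : w₁ = w₂ := by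
  have geodesic_through : ∀ w (h : G.Adj v w), G.dist u w + 1 = G.dist u v →
      ∃ q : G.Path u v, q.1.penultimate = w := by
    intro w h hd
    obtain ⟨p, hp⟩ := hG.connected.exists_walk_length_eq_dist u w
    refine ⟨⟨p.concat h.symm, (p.concat h.symm).isPath_of_length_eq_dist ?_⟩,
      p.penultimate_concat h.symm⟩
    rw [Walk.length_concat, hp, hd]
  obtain ⟨q₁, rfl⟩ := geodesic_through w₁ h₁ hd₁
  obtain ⟨q₂, rfl⟩ := geodesic_through w₂ h₂ hd₂
  rw [(hG.isAcyclic.subsingleton_path u v).elim q₁ q₂]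

end SimpleGraph

namespace HatGame

variable {V : Type*} [DecidableEq V] (G : SimpleGraph V) (a : V → ℕ)

/-- The game played by the vertices of `S` alone, on the subgraph they induce; the colours
outside `S` are irrelevant. -/
def IsStrategyOn (S : Finset V) (F : ∀ i, (∀ j, Fin (a j)) → Fin (a i)) : Prop :=
  ∀ i ∈ S, ∀ x y : ∀ j, Fin (a j), (∀ j ∈ S, G.Adj i j → x j = y j) → F i x = F i y

def IsLosingOn (S : Finset V) : Prop :=
  ∀ F, IsStrategyOn G a S F → ∃ f : ∀ j, Fin (a j), ∀ i ∈ S, F i f ≠ f i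

variable {G a}

lemma isLosingOn_singleton (hpos : ∀ j, 0 < a j) {r : V} (hr : 2 ≤ a r) :
    IsLosingOn G a {r} := by
  intro F hF
  let f₀ : ∀ j, Fin (a j) := fun j => ⟨0, hpos j⟩
  have : Nontrivial (Fin (a r)) := Fin.nontrivial_iff_two_le.mpr hr
  obtain ⟨c, hc⟩ := exists_ne (F r f₀)
  refine ⟨update f₀ r c, fun i hi => ?_⟩
  rw [mem_singleton.mp hi, update_self,
    hF r (mem_singleton_self r) _ f₀ fun j hj h => absurd h (by rw [mem_singleton.mp hj]; simp)]
  exact hc.symm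

section Leaf

variable {F : ∀ i, (∀ j, Fin (a j)) → Fin (a i)} {S : Finset V} {ℓ p : V}

namespace IsStrategyOn

lemma apply_leaf_eq (hF : IsStrategyOn G a (insert ℓ S) F) (hℓ : ∀ j ∈ S, G.Adj ℓ j → j = p)
    {x y : ∀ j, Fin (a j)} (hxy : x p = y p) : F ℓ x = F ℓ y :=
  hF ℓ (mem_insert_self ℓ S) x y fun j hj hadj => by
    obtain rfl | hj := mem_insert.mp hj
    · exact absurd hadj G.irrefl
    · obtain rfl := hℓ j hj hadj
      exact hxy

lemma apply_eq_of_ne (hF : IsStrategyOn G a (insert ℓ S) F) (hℓ : ∀ j ∈ S, G.Adj ℓ j → j = p)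
    {i : V} (hi : i ∈ S) (hip : i ≠ p) {x y : ∀ j, Fin (a j)}
    (hxy : ∀ j ∈ S, G.Adj i j → x j = y j) : F i x = F i y :=
  hF i (mem_insert_of_mem hi) x y fun j hj hadj => by
    obtain rfl | hj := mem_insert.mp hj
    · exact absurd (hℓ i hi hadj.symm) hip
    · exact hxy j hj hadj

lemma apply_update_eq (hF : IsStrategyOn G a (insert ℓ S) F) {i : V} (hi : i ∈ insert ℓ S)
    {x y : ∀ j, Fin (a j)} (hxy : ∀ j ∈ S, G.Adj i j → x j = y j) (d : Fin (a ℓ)) :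
    F i (update x ℓ d) = F i (update y ℓ d) :=
  hF i hi _ _ fun j hj hadj => by
    by_cases hjℓ : j = ℓ
    · subst hjℓ
      rw [update_self, update_self]
    · rw [update_of_ne hjℓ, update_of_ne hjℓ]
      exact hxy j ((mem_insert.mp hj).resolve_left hjℓ) hadj

end IsStrategyOn

variable (F ℓ p) in
def IsBadColor (x : ∀ j, Fin (a j)) (c : Fin (a p)) : Prop :=
  ∀ d, d ≠ F ℓ (update x p c) → F p (update x ℓ d) = c

lemma IsBadColor.unique (h3 : 3 ≤ a ℓ) {x : ∀ j, Fin (a j)} {c₁ c₂ : Fin (a p)}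
    (h₁ : IsBadColor F ℓ p x c₁) (h₂ : IsBadColor F ℓ p x c₂) : c₁ = c₂ := by
  obtain ⟨d, hd₁, hd₂⟩ :=
    Fin.exists_ne_and_ne_of_two_lt (F ℓ (update x p c₁)) (F ℓ (update x p c₂)) h3
  rw [← h₁ d hd₁, ← h₂ d hd₂]

lemma isBadColor_congr (hF : IsStrategyOn G a (insert ℓ S) F) (hℓ : ∀ j ∈ S, G.Adj ℓ j → j = p)
    (hpS : p ∈ S) {x y : ∀ j, Fin (a j)} (hxy : ∀ j ∈ S, G.Adj p j → x j = y j) (c : Fin (a p)) :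
    IsBadColor F ℓ p x c ↔ IsBadColor F ℓ p y c := by
  unfold IsBadColor
  have hleaf : F ℓ (update x p c) = F ℓ (update y p c) :=
    hF.apply_leaf_eq hℓ (by rw [update_self, update_self])
  rw [hleaf]
  simp only [hF.apply_update_eq (mem_insert_of_mem hpS) hxy]

open Classical in
variable (F ℓ p) in
/-- `p` guesses its bad colour; `d₀` only serves to give it a guess that ignores `ℓ` when
no colour is bad. -/
noncomputable def reducedStrategy (d₀ : Fin (a ℓ)) : ∀ i, (∀ j, Fin (a j)) → Fin (a i) :=
  update F p fun x =>
    if h : ∃ c, IsBadColor F ℓ p x c then h.choose else F p (update x ℓ d₀)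

lemma isStrategyOn_reducedStrategy (hF : IsStrategyOn G a (insert ℓ S) F)
    (hℓ : ∀ j ∈ S, G.Adj ℓ j → j = p) (hpS : p ∈ S) (d₀ : Fin (a ℓ)) :
    IsStrategyOn G a S (reducedStrategy F ℓ p d₀) := by
  intro i hi x y hxy
  rcases eq_or_ne i p with rfl | hip
  · have hbad : IsBadColor F ℓ i x = IsBadColor F ℓ i y :=
      funext fun c => propext (isBadColor_congr hF hℓ hpS hxy c)
    simp only [reducedStrategy, update_self, hF.apply_update_eq (mem_insert_of_mem hpS) hxy]
    rw [hbad]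
  · simp only [reducedStrategy, update_of_ne hip]
    exact hF.apply_eq_of_ne hℓ hi hip hxy

lemma exists_leaf_color_of_reducedStrategy_ne (h3 : 3 ≤ a ℓ) {d₀ : Fin (a ℓ)} {x : ∀ j, Fin (a j)}
    (hx : reducedStrategy F ℓ p d₀ p x ≠ x p) :
    ∃ d, d ≠ F ℓ x ∧ F p (update x ℓ d) ≠ x p := by
  by_contra! hbad
  have hbad' : IsBadColor F ℓ p x (x p) := by
    intro d hd
    rw [update_eq_self] at hd
    exact hbad d hd
  have hex : ∃ c, IsBadColor F ℓ p x c := ⟨x p, hbad'⟩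
  simp only [reducedStrategy, update_self, hex, dif_pos] at hx
  exact hx (hex.choose_spec.unique h3 hbad')

theorem IsLosingOn.insert (h : IsLosingOn G a S) (hℓS : ℓ ∉ S) (hpS : p ∈ S)
    (hℓ : ∀ j ∈ S, G.Adj ℓ j → j = p) (h3 : 3 ≤ a ℓ) : IsLosingOn G a (insert ℓ S) := by
  intro F hF
  obtain ⟨f, hf⟩ := h _ (isStrategyOn_reducedStrategy hF hℓ hpS ⟨0, by omega⟩)
  obtain ⟨d, hdℓ, hdp⟩ := exists_leaf_color_of_reducedStrategy_ne h3 (hf p hpS)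
  have hne : ∀ j ∈ S, j ≠ ℓ := fun j hj => ne_of_mem_of_not_mem hj hℓS
  refine ⟨update f ℓ d, fun i hi => ?_⟩
  obtain rfl | hiS := mem_insert.mp hi
  · rw [update_self, hF.apply_leaf_eq hℓ (update_of_ne (hne p hpS) ..)]
    exact hdℓ.symm
  rw [update_of_ne (hne i hiS)]
  obtain rfl | hip := eq_or_ne i p
  · exact hdp
  rw [hF.apply_eq_of_ne hℓ hiS hip fun j hj _ => update_of_ne (hne j hj) ..]
  simpa only [reducedStrategy, update_of_ne hip] using hf i hiS

end Leaf

theorem isLosingOn_of_isTree (hG : G.IsTree) {r : V} (hr : 2 ≤ a r) (h3 : ∀ v ≠ r, 3 ≤ a v)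
    (S : Finset V) (hrS : r ∈ S) (hS : ∀ v ∈ S, ∀ u, G.dist r u < G.dist r v → u ∈ S) :
    IsLosingOn G a S := by
  induction S using Finset.strongInduction with
  | H S ih =>
  obtain ⟨ℓ, hℓS, hmax⟩ := S.exists_max_image (G.dist r) ⟨r, hrS⟩
  obtain rfl | hrℓ := eq_or_ne r ℓ
  · have hS_eq : S = {r} := eq_singleton_iff_unique_mem.mpr ⟨hrS, fun v hv =>
      (hG.connected.dist_eq_zero_iff.mp (by simpa using hmax v hv)).symm⟩
    have hpos : ∀ j, 0 < a j := fun j => by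
      obtain rfl | hj := eq_or_ne j r
      · omega
      · have := h3 j hj
        omega
    exact hS_eq ▸ isLosingOn_singleton hpos hr
  obtain ⟨p, hℓp, hp⟩ := hG.connected.exists_adj_dist_add_one_eq hrℓ
  rw [← insert_erase hℓS]
  refine IsLosingOn.insert (ih _ (erase_ssubset hℓS) (mem_erase.mpr ⟨hrℓ, hrS⟩) ?_)
    (notMem_erase ℓ S) (mem_erase.mpr ⟨hℓp.ne.symm, hS ℓ hℓS p (by omega)⟩) ?_ (h3 ℓ hrℓ.symm)
  · intro v hv u hu
    obtain ⟨-, hvS⟩ := mem_erase.mp hv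
    refine mem_erase.mpr ⟨?_, hS v hvS u hu⟩
    rintro rfl
    exact absurd (hmax v hvS) (by omega)
  · intro j hj hℓj
    have hjℓ := hmax j (mem_of_mem_erase hj)
    obtain hd | hd := hG.dist_eq_dist_add_one_of_adj r hℓj
    · exact hG.eq_of_adj_of_dist_add_one_eq hℓj hℓp hd.symm hp
    · omega

end HatGame

/-- For every tree `T`, the color-sequence `(2, 3, 3, …, 3)` is losing:
if one fixed vertex `r` has 2 available colors and every other vertex has 3, then for
every strategy family on `T` there is a coloring for which every vertex guesses wrong. -/
theorem tree_two_three_losing {V : Type*} [Fintype V] [DecidableEq V]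
    (T : SimpleGraph V) (hT : T.IsTree) (r : V)
    (a : V → ℕ) (ha : a = fun i => if i = r then 2 else 3)
    (F : ∀ i : V, (∀ j : V, Fin (a j)) → Fin (a i))
    (hF : ∀ i : V, ∀ x y : ∀ j : V, Fin (a j),
      (∀ j : V, T.Adj i j → x j = y j) → F i x = F i y) :
    ∃ f : ∀ j : V, Fin (a j), ∀ i : V, F i f ≠ f i := by
  have hlosing : HatGame.IsLosingOn T a univ :=
    HatGame.isLosingOn_of_isTree hT (by simp [ha]) (fun v hv => by simp [ha, hv]) univ (mem_univ r)
      fun _ _ u _ => mem_univ u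
  obtain ⟨f, hf⟩ := hlosing F fun i _ x y hxy => hF i x y fun j => hxy j (mem_univ j)
  exact ⟨f, fun i => hf i (mem_univ i)⟩
end

section
/- If T is a tree with degree sequence (d_1, ..., d_n), then the sequence (2^{d_1}, ..., 2^{d_n}) is winning for T: if each vertex i has a color set of size 2^{deg(i)}, the players have a strategy family guaranteeing at least one correct guess on every coloring. -/
/-!
Give vertex `i` one bit per incident edge, so that a colour of `i` is a function
`G.neighborSet i → Bool`. Fix a linear order on the vertices. On an edge `ij` with `i < j`,
vertex `i` guesses that its bit on `ij` equals the bit of `j` on `ij`, while `j` guesses that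
its bit is the negation of the bit of `i`: exactly one of the two guesses is right. A vertex
guesses its whole colour correctly as soon as it is right on all its edges. If every vertex
were wrong on some edge, choosing such an edge for each vertex would inject the vertices into
the edges, which is impossible in a tree.
-/

open Finset

namespace SimpleGraph

variable {V : Type*} (G : SimpleGraph V)

def IsHatGuessingWinning (C : V → Type*) : Prop :=
  ∃ F : ∀ i : V, (∀ j : V, C j) → C i,
    (∀ i : V, ∀ x y : ∀ j : V, C j, (∀ j : V, G.Adj i j → x j = y j) → F i x = F i y) ∧
    ∀ f : ∀ j : V, C j, ∃ i : V, F i f = f i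

variable {G}

theorem IsHatGuessingWinning.of_equiv {C D : V → Type*} (e : ∀ i, C i ≃ D i)
    (h : G.IsHatGuessingWinning C) : G.IsHatGuessingWinning D := by
  obtain ⟨F, hlocal, hwin⟩ := h
  refine ⟨fun i y => e i (F i fun j => (e j).symm (y j)), fun i x y hxy => ?_, fun f => ?_⟩
  · exact congrArg (e i) (hlocal i _ _ fun j hj => by rw [hxy j hj])
  · obtain ⟨i, hi⟩ := hwin fun j => (e j).symm (f j)
    exact ⟨i, (congrArg (e i) hi).trans ((e i).apply_symm_apply (f i))⟩

theorem exists_forall_not_of_card_edgeFinset_lt [Fintype V] [DecidableRel G.Adj]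
    {L : V → V → Prop} (hL : ∀ i j, L i j → G.Adj i j) (hL_asymm : ∀ i j, L i j → ¬L j i)
    (hcard : #G.edgeFinset < Fintype.card V) : ∃ i, ∀ j, ¬L i j := by
  by_contra! h
  choose J hJ using h
  have hmaps : Set.MapsTo (fun i => s(i, J i)) (univ : Finset V) G.edgeFinset :=
    fun i _ => G.mem_edgeFinset.mpr (hL i (J i) (hJ i))
  have hinj : Set.InjOn (fun i => s(i, J i)) (univ : Finset V) := by
    intro i _ i' _ hii'
    rcases Sym2.eq_iff.mp hii' with ⟨hii', -⟩ | ⟨hi, hi'⟩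
    · exact hii'
    · exact (hL_asymm _ _ (hi' ▸ hJ i) (hi ▸ hJ i')).elim
  exact hcard.not_ge (card_le_card_of_injOn _ hmaps hinj)

section EdgeGuess

variable [LinearOrder V]

def edgeGuess (i : V) (x : ∀ j, G.neighborSet j → Bool) (p : G.neighborSet i) : Bool :=
  if i < p then x p ⟨i, G.adj_symm p.2⟩ else !x p ⟨i, G.adj_symm p.2⟩

theorem edgeGuess_eq_or_edgeGuess_eq (x : ∀ j, G.neighborSet j → Bool) {i j : V}
    (h : G.Adj i j) :
    G.edgeGuess i x ⟨j, h⟩ = x i ⟨j, h⟩ ∨ G.edgeGuess j x ⟨i, h.symm⟩ = x j ⟨i, h.symm⟩ := by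
  rcases lt_or_gt_of_ne h.ne with hij | hji
  · simp only [edgeGuess, if_pos hij, if_neg hij.not_gt]
    cases x i ⟨j, h⟩ <;> cases x j ⟨i, h.symm⟩ <;> simp
  · simp only [edgeGuess, if_pos hji, if_neg hji.not_gt]
    cases x i ⟨j, h⟩ <;> cases x j ⟨i, h.symm⟩ <;> simp

end EdgeGuess

theorem isHatGuessingWinning_neighborSet_bool [Fintype V] [DecidableRel G.Adj]
    (hcard : #G.edgeFinset < Fintype.card V) :
    G.IsHatGuessingWinning fun i => G.neighborSet i → Bool := by
  let _ : LinearOrder V := IsWellOrder.linearOrder WellOrderingRel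
  refine ⟨G.edgeGuess, fun i x y hxy => funext fun p => ?_, fun x => ?_⟩
  · simp only [edgeGuess, hxy p p.2]
  · obtain ⟨i, hi⟩ := exists_forall_not_of_card_edgeFinset_lt
      (L := fun i j => ∃ h : G.Adj i j, G.edgeGuess i x ⟨j, h⟩ ≠ x i ⟨j, h⟩)
      (fun _ _ ⟨h, _⟩ => h)
      (fun _ _ ⟨h, hi⟩ ⟨_, hj⟩ => (G.edgeGuess_eq_or_edgeGuess_eq x h).elim hi hj) hcard
    exact ⟨i, funext fun p => by_contra fun hp => hi p ⟨p.2, hp⟩⟩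

end SimpleGraph

/-- If `T` is a tree with degree sequence `(d_1, …, d_n)`, then the
sequence `(2^{d_1}, …, 2^{d_n})` is winning for `T`: if each vertex `i` has a color set
of size `2^{deg(i)}`, the players have a strategy family guaranteeing at least one
correct guess on every coloring. -/
theorem tree_power_degree_winning {V : Type*} [Fintype V]
    (T : SimpleGraph V) [DecidableRel T.Adj] (hT : T.IsTree)
    (a : V → ℕ) (ha : a = fun i => 2 ^ T.degree i) :
    ∃ F : ∀ i : V, (∀ j : V, Fin (a j)) → Fin (a i),
      (∀ i : V, ∀ x y : ∀ j : V, Fin (a j),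
        (∀ j : V, T.Adj i j → x j = y j) → F i x = F i y) ∧
      (∀ f : ∀ j : V, Fin (a j), ∃ i : V, F i f = f i) := by
  classical
  subst ha
  show T.IsHatGuessingWinning fun i => Fin (2 ^ T.degree i)
  have hcard : #T.edgeFinset < Fintype.card V := by
    have := hT.card_edgeFinset
    omega
  refine (SimpleGraph.isHatGuessingWinning_neighborSet_bool hcard).of_equiv
    fun i => Fintype.equivOfCardEq ?_
  rw [Fintype.card_fun, Fintype.card_bool, Fintype.card_fin,
    SimpleGraph.card_neighborSet_eq_degree]
end

section
/- For the complete graph K_n, the admissible-coloring hat guessing number satisfies μ_a(K_n) ≥ 2^n − 1: for every number of colors K and every set A of colorings of the n vertices with |A| ≤ 2^n − 1, the players have a strategy guaranteeing a correct guess whenever the adversary's coloring lies in A. -/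
/-!
Induction on the number of players. Player `0` always guesses a colour `c` that occurs at least
as often as any other colour in position `0` among the admissible colourings. If his hat has
another colour `d`, then the admissible colourings with `x 0 = d` number at most `|A| / 2 < 2 ^ n`,
and the other `n` players, who see colour `d`, play a winning strategy for the tails of those
colourings.
-/

open Finset

variable {α : Type*}

/-- Legality of a strategy on the complete graph, where each player sees every hat but his own. -/
def IgnoresOwnHat {n : ℕ} (F : Fin n → (Fin n → α) → α) : Prop :=
  ∀ i x y, (∀ j, j ≠ i → x j = y j) → F i x = F i y

def WinsOn {n : ℕ} (F : Fin n → (Fin n → α) → α) (A : Finset (Fin n → α)) : Prop :=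
  ∀ x ∈ A, ∃ i, F i x = x i

theorem exists_forall_ne_two_mul_card_filter_le {β : Type*} [DecidableEq α] [Nonempty α]
    (A : Finset β) (f : β → α) : ∃ c, ∀ d ≠ c, 2 * #{x ∈ A | f x = d} ≤ #A := by
  rcases A.eq_empty_or_nonempty with rfl | hA
  · exact ⟨Classical.arbitrary α, fun _ _ => by simp⟩
  obtain ⟨c, -, hc⟩ := (A.image f).exists_max_image (fun d => #{x ∈ A | f x = d}) (hA.image f)
  refine ⟨c, fun d hd => ?_⟩
  have hle : #{x ∈ A | f x = d} ≤ #{x ∈ A | f x = c} := by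
    by_cases hdA : d ∈ A.image f
    · exact hc d hdA
    · rw [filter_false_of_mem fun x hx hfx => hdA (mem_image.2 ⟨x, hx, hfx⟩), card_empty]
      exact Nat.zero_le _
  have hc_le : #{x ∈ A | f x = c} ≤ #{x ∈ A | ¬f x = d} :=
    card_le_card (monotone_filter_right A fun _ _ hfc hfd => hd (hfd.symm.trans hfc))
  have := card_filter_add_card_filter_not (s := A) (f · = d)
  omega

def extendStrategy {n : ℕ} (c : α) (G : α → Fin n → (Fin n → α) → α) :
    Fin (n + 1) → (Fin (n + 1) → α) → α :=
  Fin.cases (fun _ => c) fun i x => G (x 0) i (Fin.tail x)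

theorem ignoresOwnHat_extendStrategy {n : ℕ} (c : α) {G : α → Fin n → (Fin n → α) → α}
    (hG : ∀ d, IgnoresOwnHat (G d)) : IgnoresOwnHat (extendStrategy c G) := by
  intro i x y hxy
  induction i using Fin.cases with
  | zero => rfl
  | succ i =>
    simp only [extendStrategy, Fin.cases_succ]
    rw [hxy 0 (Fin.succ_ne_zero i).symm]
    exact hG _ i _ _ fun j hj => hxy j.succ (Fin.succ_injective _ |>.ne hj)

theorem winsOn_extendStrategy [DecidableEq α] {n : ℕ} {c : α} {G : α → Fin n → (Fin n → α) → α}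
    {A : Finset (Fin (n + 1) → α)}
    (hG : ∀ d ≠ c, WinsOn (G d) ({x ∈ A | x 0 = d}.image Fin.tail)) :
    WinsOn (extendStrategy c G) A := by
  intro x hx
  by_cases hc : x 0 = c
  · exact ⟨0, hc.symm⟩
  · obtain ⟨i, hi⟩ := hG (x 0) hc (Fin.tail x) (mem_image_of_mem _ (mem_filter.2 ⟨hx, rfl⟩))
    exact ⟨i.succ, hi⟩

theorem exists_ignoresOwnHat_winsOn_of_card_lt [DecidableEq α] :
    ∀ {n : ℕ} (A : Finset (Fin n → α)), #A < 2 ^ n →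
      ∃ F : Fin n → (Fin n → α) → α, IgnoresOwnHat F ∧ WinsOn F A
  | 0, A, hA => ⟨fun i => i.elim0, fun i => i.elim0, fun x hx => by simp_all⟩
  | n + 1, A, hA => by
    cases isEmpty_or_nonempty α
    · exact ⟨fun _ x => isEmptyElim (x 0), fun _ x => isEmptyElim (x 0),
        fun x _ => isEmptyElim (x 0)⟩
    obtain ⟨c, hc⟩ := exists_forall_ne_two_mul_card_filter_le A (· 0)
    have hslice (d : α) (hd : d ≠ c) : #({x ∈ A | x 0 = d}.image Fin.tail) < 2 ^ n := by
      have := card_image_le (s := {x ∈ A | x 0 = d}) (f := Fin.tail)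
      have := hc d hd
      rw [pow_succ] at hA
      omega
    have hG (d : α) : ∃ G : Fin n → (Fin n → α) → α, IgnoresOwnHat G ∧
        (d ≠ c → WinsOn G ({x ∈ A | x 0 = d}.image Fin.tail)) := by
      by_cases hd : d = c
      · obtain ⟨G, hG, -⟩ := exists_ignoresOwnHat_winsOn_of_card_lt (∅ : Finset (Fin n → α))
          (by simp)
        exact ⟨G, hG, absurd hd⟩
      · obtain ⟨G, hG, hwin⟩ := exists_ignoresOwnHat_winsOn_of_card_lt _ (hslice d hd)
        exact ⟨G, hG, fun _ => hwin⟩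
    choose G hG hwin using hG
    exact ⟨extendStrategy c G, ignoresOwnHat_extendStrategy c hG, winsOn_extendStrategy hwin⟩

/-- `μ_a(K_n) ≥ 2^n − 1`: for every number of colors `K` and every set `A`
of colorings of the `n` vertices of the complete graph with `|A| ≤ 2^n − 1`, the players
(each seeing all others' hats) have a strategy guaranteeing a correct guess whenever the
adversary's coloring lies in `A`. -/
theorem admissible_hat_guessing_complete (n K : ℕ)
    (A : Finset (Fin n → Fin K)) (hA : A.card ≤ 2 ^ n - 1) :
    ∃ F : Fin n → (Fin n → Fin K) → Fin K,
      (∀ i : Fin n, ∀ x y : Fin n → Fin K, (∀ j : Fin n, j ≠ i → x j = y j) → F i x = F i y) ∧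
      (∀ x ∈ A, ∃ i : Fin n, F i x = x i) :=
  exists_ignoresOwnHat_winsOn_of_card_lt A (by have := n.one_le_two_pow; omega)
end
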